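/- arXiv:1605.08013 — 6 statements merged into one kernel-verified Lean document; each statement's English description precedes it below -/
import Mathlib

section
/- Let r ≥ 2 and k ≥ 3 be integers and let F̂ be any r-pattern of the complete graph K_k. Then for every natural number n there exists a complete multipartite graph G on n vertices that is (r,F̂)-extremal, i.e., c_{r,F̂}(G) = c_{r,F̂}(n). -/
open SimpleGraph

/-- A (not necessarily proper) `r`-edge-coloring of a graph `G`, encoded as a symmetric
function on ordered pairs of vertices whose value on non-adjacent pairs is pinned to `0`. -/
def IsEdgeColoring {V : Type*} {r : ℕ} (G : SimpleGraph V) (c : V → V → Fin r) : Prop :=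
  (∀ u v, c u v = c v u) ∧ ∀ u v, ¬ G.Adj u v → (c u v).1 = 0

/-- The coloring `c` of `G` contains a copy of the pattern `p` of the complete graph `K_k`
with all vertices inside the set `A`: there is an injective map `f` of `Fin k` into `A`
whose image is a clique of `G` and such that two edges of the copy get equal colors
exactly when the corresponding edges of `K_k` lie in the same class of the pattern. -/
def ContainsPatternOn {V : Type*} {k r s : ℕ} (G : SimpleGraph V) (A : Set V)
    (p : Fin k → Fin k → Fin s) (c : V → V → Fin r) : Prop :=
  ∃ f : Fin k → V, (∀ i, f i ∈ A) ∧ Function.Injective f ∧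
    (∀ i j, i ≠ j → G.Adj (f i) (f j)) ∧
    ∀ i j i' j', i ≠ j → i' ≠ j' →
      (c (f i) (f j) = c (f i') (f j') ↔ p i j = p i' j')

/-- The coloring `c` of `G` contains a copy of the pattern `p`. -/
def ContainsPattern {V : Type*} {k r s : ℕ} (G : SimpleGraph V)
    (p : Fin k → Fin k → Fin s) (c : V → V → Fin r) : Prop :=
  ContainsPatternOn G Set.univ p c

/-- `c_{r,p}(G)`: the number of `p`-free `r`-edge-colorings of `G`. -/
noncomputable def colCount {V : Type*} {k s : ℕ} (r : ℕ) (p : Fin k → Fin k → Fin s)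
    (G : SimpleGraph V) : ℕ :=
  Nat.card {c : V → V → Fin r // IsEdgeColoring G c ∧ ¬ ContainsPattern G p c}

/-- `G` is a complete multipartite graph: vertices can be partitioned (into the fibers
of some map `f`) so that two vertices are adjacent iff they lie in different parts. -/
def IsCompleteMultipartiteGraph {V : Type*} (G : SimpleGraph V) : Prop :=
  ∃ f : V → V, ∀ u v, G.Adj u v ↔ f u ≠ f v

/-!
Zykov symmetrization. If `u` and `v` are nonadjacent, no copy of `K_k` meets both, so a free
coloring of `G` is a coloring `τ` of `G - u - v` together with independent free choices `X τ` of
the colors at `u` and `Y τ` of the colors at `v`: `c(G) = ∑ X Y`. Turning `v` into a twin of `u`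
gives `∑ X²`, and turning `u` into a twin of `v` gives `∑ Y²`, so one of the two symmetrized
graphs has at least as many free colorings as `G`. If nonadjacency is not transitive, say
`b ≁ a`, `b ≁ c`, `a ∼ c`, symmetrizing `a, b` moves the degree of each other vertex `x` by
`±ε x` in the two graphs, with `ε c ≠ 0`, so it also strictly increases the sum of squared
degrees in total. Hence a graph maximizing `(c(G), ∑ deg²)` lexicographically is complete
multipartite.
-/

variable {V W : Type*} {k r s : ℕ}

theorem Fintype.sum_comp_update_id [Fintype V] [DecidableEq V] (F : V → ℤ) (u v : V) :
    ∑ x, F (Function.update id v u x) = ∑ x, F x - F v + F u := by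
  have hcomp : (fun x => F (Function.update id v u x)) = Function.update F v (F u) :=
    Function.comp_update F id v u
  rw [hcomp, Finset.sum_update_of_mem (Finset.mem_univ v), Fintype.sum_eq_add_sum_compl v F,
    Finset.compl_eq_univ_sdiff]
  ring

namespace SimpleGraph

theorem deleteIncidenceSet_comm (G : SimpleGraph V) (u v : V) :
    (G.deleteIncidenceSet v).deleteIncidenceSet u =
      (G.deleteIncidenceSet u).deleteIncidenceSet v := by
  ext x y
  simp only [deleteIncidenceSet_adj]
  tauto

theorem IsCompleteMultipartite.isCompleteMultipartiteGraph {G : SimpleGraph V}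
    (h : G.IsCompleteMultipartite) : IsCompleteMultipartiteGraph G :=
  ⟨fun x => (Quotient.mk h.setoid x).out, fun x y => by
    rw [Ne, Quotient.out_inj, Quotient.eq]
    exact not_not.symm⟩

section Twins

variable [DecidableEq V] {G : SimpleGraph V} {u v : V}

/-- `v` becomes a twin of `u`: its neighbourhood is replaced by that of `u`. -/
def twin (G : SimpleGraph V) (u v : V) : SimpleGraph V :=
  G.comap (Function.update id v u)

theorem twin_adj {x y : V} :
    (twin G u v).Adj x y ↔ G.Adj (Function.update id v u x) (Function.update id v u y) :=
  Iff.rfl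

theorem not_twin_adj : ¬(twin G u v).Adj u v := by
  simp [twin_adj, Function.update_apply]

theorem deleteIncidenceSet_twin_self :
    (twin G u v).deleteIncidenceSet v = G.deleteIncidenceSet v := by
  ext x y
  simp +contextual [deleteIncidenceSet_adj, twin_adj, Function.update_apply]

theorem deleteIncidenceSet_twin :
    (twin G u v).deleteIncidenceSet u = (G.deleteIncidenceSet v).comap (Equiv.swap u v) := by
  ext x y
  simp only [deleteIncidenceSet_adj, twin_adj, comap_adj, Function.update_apply, id,
    Equiv.swap_apply_def]
  by_cases hxu : x = u <;> by_cases hyu : y = u <;> by_cases hxv : x = v <;>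
    by_cases hyv : y = v <;> grind

end Twins

section Degrees

open Classical

variable [Fintype V]

noncomputable def degreeSqSum (G : SimpleGraph V) : ℕ :=
  ∑ x, G.degree x ^ 2

theorem degree_eq_sum (G : SimpleGraph V) (x : V) :
    (G.degree x : ℤ) = ∑ y, if G.Adj x y then 1 else 0 := by
  rw [← card_neighborFinset_eq_degree, neighborFinset_eq_filter, Finset.card_filter]
  push_cast
  rfl

/-- The degree of `x` in `G` after the neighbourhood of `v` is replaced by that of `u`. -/
noncomputable def shiftedDegree (G : SimpleGraph V) (u v x : V) : ℤ :=
  G.degree x - (if G.Adj x v then 1 else 0) + if G.Adj x u then 1 else 0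

variable [DecidableEq V] {G : SimpleGraph V} {u v : V}

theorem degree_twin (x : V) :
    ((twin G u v).degree x : ℤ) = G.shiftedDegree u v (Function.update id v u x) := by
  rw [degree_eq_sum, shiftedDegree, degree_eq_sum]
  exact Fintype.sum_comp_update_id
    (fun y => if G.Adj (Function.update id v u x) y then 1 else 0) u v

theorem degreeSqSum_twin (hadj : ¬G.Adj u v) :
    (degreeSqSum (twin G u v) : ℤ) =
      ∑ x, G.shiftedDegree u v x ^ 2 - (G.degree v : ℤ) ^ 2 + (G.degree u : ℤ) ^ 2 := by
  rw [degreeSqSum]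
  push_cast
  simp only [degree_twin]
  rw [Fintype.sum_comp_update_id (fun z => G.shiftedDegree u v z ^ 2) u v]
  have hvu : ¬G.Adj v u := fun h => hadj h.symm
  simp [shiftedDegree, hadj, hvu]

theorem two_mul_degreeSqSum_lt (hadj : ¬G.Adj u v) {w : V} (hvw : G.Adj v w)
    (huw : ¬G.Adj u w) :
    2 * degreeSqSum G < degreeSqSum (twin G u v) + degreeSqSum (twin G v u) := by
  zify
  rw [degreeSqSum_twin hadj, degreeSqSum_twin fun h => hadj h.symm, degreeSqSum]
  set e : V → ℤ := fun x => (if G.Adj x v then 1 else 0) - if G.Adj x u then 1 else 0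
  have hpos : 0 < ∑ x, e x ^ 2 :=
    Finset.sum_pos' (fun x _ => sq_nonneg (e x))
      ⟨w, Finset.mem_univ w, by
        have hwu : ¬G.Adj w u := fun h => huw h.symm
        simp [e, hvw.symm, hwu]⟩
  calc (2 * ∑ x, G.degree x ^ 2 : ℤ)
      < 2 * ∑ x, (G.degree x : ℤ) ^ 2 + 2 * ∑ x, e x ^ 2 := by push_cast; linarith
    _ = ∑ x, (G.shiftedDegree u v x ^ 2 + G.shiftedDegree v u x ^ 2) := by
      rw [Finset.mul_sum, Finset.mul_sum, ← Finset.sum_add_distrib]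
      exact Finset.sum_congr rfl fun x _ => by simp only [e, shiftedDegree]; ring
    _ = _ := by
      rw [Finset.sum_add_distrib]
      ring

end Degrees

end SimpleGraph

section Containment

variable {p : Fin k → Fin k → Fin s}

theorem ContainsPattern.map {G : SimpleGraph V} {H : SimpleGraph W} {c : V → V → Fin r}
    {d : W → W → Fin r} {g : V → W} (hg : Function.Injective g)
    (hadj : ∀ x y, G.Adj x y → H.Adj (g x) (g y))
    (hcol : ∀ x y, G.Adj x y → d (g x) (g y) = c x y) (h : ContainsPattern G p c) :
    ContainsPattern H p d := by
  obtain ⟨f, -, hinj, hf, hfc⟩ := h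
  refine ⟨g ∘ f, fun _ => trivial, hg.comp hinj, fun i j hij => hadj _ _ (hf i j hij),
    fun i j i' j' hij hij' => ?_⟩
  simp only [Function.comp_apply, hcol _ _ (hf i j hij), hcol _ _ (hf i' j' hij')]
  exact hfc i j i' j' hij hij'

theorem ContainsPattern.mono {G H : SimpleGraph V} {c : V → V → Fin r} (hGH : G ≤ H)
    (h : ContainsPattern G p c) : ContainsPattern H p c :=
  h.map Function.injective_id (fun _ _ hxy => hGH hxy) fun _ _ _ => rfl

theorem containsPattern_congr {G : SimpleGraph V} {c d : V → V → Fin r}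
    (h : ∀ x y, G.Adj x y → c x y = d x y) :
    ContainsPattern G p c ↔ ContainsPattern G p d :=
  ⟨ContainsPattern.map Function.injective_id (fun _ _ => id) fun x y hxy => (h x y hxy).symm,
    ContainsPattern.map Function.injective_id (fun _ _ => id) h⟩

theorem containsPattern_comap_equiv {H : SimpleGraph W} (σ : V ≃ W) (d : W → W → Fin r) :
    ContainsPattern (H.comap σ) p (fun x y => d (σ x) (σ y)) ↔ ContainsPattern H p d :=
  ⟨ContainsPattern.map σ.injective (fun _ _ => id) fun _ _ _ => rfl,
    ContainsPattern.map σ.symm.injective (by simp) (by simp)⟩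

/-- A copy of `K_k` cannot use two nonadjacent vertices. -/
theorem containsPattern_iff_of_not_adj {G : SimpleGraph V} {c : V → V → Fin r} {u v : V}
    (huv : u ≠ v) (hadj : ¬G.Adj u v) :
    ContainsPattern G p c ↔
      ContainsPattern (G.deleteIncidenceSet v) p c ∨
        ContainsPattern (G.deleteIncidenceSet u) p c := by
  refine ⟨?_, fun h => h.elim (·.mono (G.deleteIncidenceSet_le v))
    (·.mono (G.deleteIncidenceSet_le u))⟩
  rintro ⟨f, -, hinj, hf, hfc⟩
  have hcopy : ∀ w, (∀ i, f i ≠ w) → ContainsPattern (G.deleteIncidenceSet w) p c :=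
    fun w hw => ⟨f, fun _ => trivial, hinj,
      fun i j hij => deleteIncidenceSet_adj.mpr ⟨hf i j hij, hw i, hw j⟩, hfc⟩
  by_contra! hboth
  obtain ⟨i, hi⟩ : ∃ i, f i = v := by simpa using mt (hcopy v) hboth.1
  obtain ⟨j, hj⟩ : ∃ j, f j = u := by simpa using mt (hcopy u) hboth.2
  exact hadj (hj ▸ hi ▸ hf j i fun h => huv (by rw [← hj, ← hi, h]))

end Containment

section Rows

variable [DecidableEq V]

def setRow (w : V) (a : V → Fin r) (c : V → V → Fin r) : V → V → Fin r :=
  fun x y => if x = w then a y else if y = w then a x else c x y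

@[simp]
theorem setRow_self_left (w : V) (a : V → Fin r) (c : V → V → Fin r) (y : V) :
    setRow w a c w y = a y :=
  if_pos rfl

theorem setRow_apply_of_ne {w x y : V} (a : V → Fin r) (c : V → V → Fin r) (hx : x ≠ w)
    (hy : y ≠ w) : setRow w a c x y = c x y := by
  simp [setRow, hx, hy]

theorem setRow_comm {u v : V} (huv : u ≠ v) {a b : V → Fin r} (hab : a v = b u)
    (c : V → V → Fin r) : setRow u a (setRow v b c) = setRow v b (setRow u a c) := by
  funext x y
  unfold setRow
  by_cases hxu : x = u <;> by_cases hyu : y = u <;> by_cases hxv : x = v <;>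
    by_cases hyv : y = v <;> simp_all [eq_comm]

theorem setRow_setRow_apply_right {u v : V} (huv : u ≠ v) {a b : V → Fin r} (hab : a v = b u)
    (τ : V → V → Fin r) (y : V) : setRow u a (setRow v b τ) v y = b y := by
  rw [setRow_comm huv hab, setRow_self_left]

theorem containsPattern_setRow_iff {p : Fin k → Fin k → Fin s} {G : SimpleGraph V} {w : V}
    (a : V → Fin r) (c : V → V → Fin r) :
    ContainsPattern (G.deleteIncidenceSet w) p (setRow w a c) ↔
      ContainsPattern (G.deleteIncidenceSet w) p c :=
  containsPattern_congr fun _ _ hxy =>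
    setRow_apply_of_ne a c (deleteIncidenceSet_adj.mp hxy).2.1 (deleteIncidenceSet_adj.mp hxy).2.2

end Rows

section Splitting

variable [NeZero r]

theorem IsEdgeColoring.eq_zero {G : SimpleGraph V} {c : V → V → Fin r} (hc : IsEdgeColoring G c)
    {x y : V} (hxy : ¬G.Adj x y) : c x y = 0 :=
  Fin.val_eq_zero_iff.mp (hc.2 x y hxy)

variable [DecidableEq V]

theorem IsEdgeColoring.setRow_zero {G : SimpleGraph V} {c : V → V → Fin r}
    (hc : IsEdgeColoring G c) (w : V) :
    IsEdgeColoring (G.deleteIncidenceSet w) (setRow w 0 c) := by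
  refine ⟨fun x y => ?_, fun x y hxy => ?_⟩
  · unfold setRow
    split_ifs <;> simp_all [hc.1 x y]
  · rw [deleteIncidenceSet_adj] at hxy
    unfold setRow
    split_ifs <;> simp_all [hc.eq_zero]

theorem isEdgeColoring_setRow {G : SimpleGraph V} {τ : V → V → Fin r} {w : V} {a : V → Fin r}
    (hτ : IsEdgeColoring (G.deleteIncidenceSet w) τ) (ha : ∀ x, ¬G.Adj w x → a x = 0) :
    IsEdgeColoring G (setRow w a τ) := by
  refine ⟨fun x y => ?_, fun x y hxy => ?_⟩
  · unfold setRow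
    split_ifs <;> simp_all [hτ.1 x y]
  · suffices setRow w a τ x y = 0 by simp [this]
    unfold setRow
    split_ifs with hx hy
    · exact ha y (hx ▸ hxy)
    · exact ha x (hy ▸ fun h => hxy h.symm)
    · exact hτ.eq_zero fun h => hxy (deleteIncidenceSet_adj.mp h).1

def FreeRows (p : Fin k → Fin k → Fin s) (G : SimpleGraph V) (w : V) (τ : V → V → Fin r) :
    Type _ :=
  {a : V → Fin r // (∀ x, ¬G.Adj w x → a x = 0) ∧ ¬ContainsPattern G p (setRow w a τ)}

variable {G : SimpleGraph V} {u v : V}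

theorem FreeRows.apply_eq_zero {p : Fin k → Fin k → Fin s} {τ : V → V → Fin r}
    (a : FreeRows p (G.deleteIncidenceSet v) u τ) : a.1 v = 0 :=
  a.2.1 v (by simp [deleteIncidenceSet_adj])

theorem setRow_setRow_setRow_zero {c : V → V → Fin r} (hc : ∀ x y, c x y = c y x) :
    setRow u (c u) (setRow v (c v) (setRow u 0 (setRow v 0 c))) = c := by
  funext x y
  unfold setRow
  split_ifs <;> subst_vars <;> simp [hc]

theorem setRow_zero_setRow_zero_setRow {τ : V → V → Fin r}
    (hτ : IsEdgeColoring ((G.deleteIncidenceSet v).deleteIncidenceSet u) τ) (a b : V → Fin r) :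
    setRow u 0 (setRow v 0 (setRow u a (setRow v b τ))) = τ := by
  have hzero : ∀ x y, x = u ∨ y = u ∨ x = v ∨ y = v → τ x y = 0 := fun x y h =>
    hτ.eq_zero fun hxy => by simp only [deleteIncidenceSet_adj] at hxy; tauto
  funext x y
  unfold setRow
  split_ifs <;> simp_all

omit [NeZero r] in
theorem containsPattern_setRow_setRow_iff {p : Fin k → Fin k → Fin s} (huv : u ≠ v)
    (hadj : ¬G.Adj u v) {a b : V → Fin r} (hab : a v = b u) (τ : V → V → Fin r) :
    ContainsPattern G p (setRow u a (setRow v b τ)) ↔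
      ContainsPattern (G.deleteIncidenceSet v) p (setRow u a τ) ∨
        ContainsPattern (G.deleteIncidenceSet u) p (setRow v b τ) := by
  rw [containsPattern_iff_of_not_adj huv hadj, containsPattern_setRow_iff, setRow_comm huv hab,
    containsPattern_setRow_iff]

omit [DecidableEq V] in
theorem IsEdgeColoring.row_eq_zero {c : V → V → Fin r} (hc : IsEdgeColoring G c) (huv : u ≠ v)
    (hadj : ¬G.Adj u v) {x : V} (hx : ¬(G.deleteIncidenceSet v).Adj u x) : c u x = 0 := by
  refine hc.eq_zero fun h => hx (deleteIncidenceSet_adj.mpr ⟨h, huv, ?_⟩)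
  rintro rfl
  exact hadj h

theorem IsEdgeColoring.not_containsPattern_rows {p : Fin k → Fin k → Fin s}
    {c : V → V → Fin r} (hc : IsEdgeColoring G c) (huv : u ≠ v) (hadj : ¬G.Adj u v)
    (hfree : ¬ContainsPattern G p c) :
    ¬ContainsPattern (G.deleteIncidenceSet v) p
        (setRow u (c u) (setRow u 0 (setRow v 0 c))) ∧
      ¬ContainsPattern (G.deleteIncidenceSet u) p
        (setRow v (c v) (setRow u 0 (setRow v 0 c))) := by
  rw [← not_or, ← containsPattern_setRow_setRow_iff huv hadj (hc.1 u v),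
    setRow_setRow_setRow_zero hc.1]
  exact hfree

def freeColoringFiberEquiv (p : Fin k → Fin k → Fin s) (huv : u ≠ v) (hadj : ¬G.Adj u v)
    {τ : V → V → Fin r}
    (hτ : IsEdgeColoring ((G.deleteIncidenceSet v).deleteIncidenceSet u) τ) :
    {c : {c // IsEdgeColoring G c ∧ ¬ContainsPattern G p c} //
        setRow u 0 (setRow v 0 c.1) = τ} ≃
      FreeRows p (G.deleteIncidenceSet v) u τ × FreeRows p (G.deleteIncidenceSet u) v τ where
  toFun c :=
    (⟨c.1.1 u, fun _ => c.1.2.1.row_eq_zero huv hadj, by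
      simpa only [c.2] using (c.1.2.1.not_containsPattern_rows huv hadj c.1.2.2).1⟩,
    ⟨c.1.1 v, fun _ => c.1.2.1.row_eq_zero huv.symm (fun h => hadj h.symm), by
      simpa only [c.2] using (c.1.2.1.not_containsPattern_rows huv hadj c.1.2.2).2⟩)
  invFun ab :=
    have hab : ab.1.1 v = ab.2.1 u := ab.1.apply_eq_zero.trans ab.2.apply_eq_zero.symm
    ⟨⟨setRow u ab.1.1 (setRow v ab.2.1 τ),
      isEdgeColoring_setRow (isEdgeColoring_setRow (deleteIncidenceSet_comm G u v ▸ hτ) ab.2.2.1)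
        fun x hx => ab.1.2.1 x fun h => hx (deleteIncidenceSet_adj.mp h).1,
      (containsPattern_setRow_setRow_iff huv hadj hab τ).not.mpr
        (not_or.mpr ⟨ab.1.2.2, ab.2.2.2⟩)⟩,
      setRow_zero_setRow_zero_setRow hτ _ _⟩
  left_inv c := by
    refine Subtype.ext (Subtype.ext ?_)
    simpa only [← c.2] using setRow_setRow_setRow_zero c.1.2.1.1
  right_inv ab := by
    refine Prod.ext (Subtype.ext ?_) (Subtype.ext ?_)
    · funext y
      exact setRow_self_left _ _ _ y
    · funext y
      exact setRow_setRow_apply_right huv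
        (ab.1.apply_eq_zero.trans ab.2.apply_eq_zero.symm) τ y

end Splitting

section Symmetrization

variable [DecidableEq V] [NeZero r] {G : SimpleGraph V} {u v : V}

theorem IsEdgeColoring.comp_swap {τ : V → V → Fin r}
    (hτ : IsEdgeColoring ((G.deleteIncidenceSet v).deleteIncidenceSet u) τ) :
    (fun x y => τ (Equiv.swap u v x) (Equiv.swap u v y)) = τ := by
  have hzero : ∀ x y, x = u ∨ y = u ∨ x = v ∨ y = v → τ x y = 0 := fun x y h =>
    hτ.eq_zero fun hxy => by simp only [deleteIncidenceSet_adj] at hxy; tauto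
  funext x y
  simp only [Equiv.swap_apply_def]
  split_ifs <;> simp_all

theorem card_freeRows_comap [DecidableEq W] (p : Fin k → Fin k → Fin s) (H : SimpleGraph W)
    (σ : V ≃ W) (w : V) (τ : W → W → Fin r) :
    Nat.card (FreeRows p (H.comap σ) w (fun x y => τ (σ x) (σ y))) =
      Nat.card (FreeRows p H (σ w) τ) := by
  refine Nat.card_congr (Equiv.subtypeEquiv (σ.arrowCongr (Equiv.refl _)) fun a => ?_)
  have hset : (setRow w a fun x y => τ (σ x) (σ y)) =
      fun x y => setRow (σ w) (σ.arrowCongr (Equiv.refl _) a) τ (σ x) (σ y) := by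
    funext x y
    simp [setRow]
  rw [hset, containsPattern_comap_equiv]
  refine and_congr ?_ Iff.rfl
  simp only [comap_adj, Equiv.arrowCongr_apply, Equiv.coe_refl, Function.comp_apply, id]
  exact σ.forall_congr (by simp)

variable [Fintype V]

open Classical in
theorem colCount_eq_sum (p : Fin k → Fin k → Fin s) (huv : u ≠ v) (hadj : ¬G.Adj u v) :
    colCount r p G =
      ∑ τ : {τ : V → V → Fin r //
          IsEdgeColoring ((G.deleteIncidenceSet v).deleteIncidenceSet u) τ},
        Nat.card (FreeRows p (G.deleteIncidenceSet v) u τ.1) *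
          Nat.card (FreeRows p (G.deleteIncidenceSet u) v τ.1) := by
  let restrict (c : {c : V → V → Fin r // IsEdgeColoring G c ∧ ¬ContainsPattern G p c}) :
      {τ // IsEdgeColoring ((G.deleteIncidenceSet v).deleteIncidenceSet u) τ} :=
    ⟨setRow u 0 (setRow v 0 c.1), (c.2.1.setRow_zero v).setRow_zero u⟩
  rw [colCount, Nat.card_congr (Equiv.sigmaFiberEquiv restrict).symm, Nat.card_sigma]
  refine Finset.sum_congr rfl fun τ _ => ?_
  rw [← Nat.card_prod]
  exact Nat.card_congr ((Equiv.subtypeEquivRight fun _ => Subtype.ext_iff).trans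
    (freeColoringFiberEquiv p huv hadj τ.2))

open Classical in
theorem colCount_twin (p : Fin k → Fin k → Fin s) (huv : u ≠ v) :
    colCount r p (twin G u v) =
      ∑ τ : {τ : V → V → Fin r //
          IsEdgeColoring ((G.deleteIncidenceSet v).deleteIncidenceSet u) τ},
        Nat.card (FreeRows p (G.deleteIncidenceSet v) u τ.1) ^ 2 := by
  rw [colCount_eq_sum p huv not_twin_adj, deleteIncidenceSet_twin_self]
  refine Finset.sum_congr rfl fun τ _ => ?_
  have hswap := card_freeRows_comap p (G.deleteIncidenceSet v) (Equiv.swap u v) v τ.1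
  rw [τ.2.comp_swap, Equiv.swap_apply_right] at hswap
  rw [deleteIncidenceSet_twin, hswap, sq]

theorem two_mul_colCount_le (p : Fin k → Fin k → Fin s) (huv : u ≠ v) (hadj : ¬G.Adj u v) :
    2 * colCount r p G ≤ colCount r p (twin G u v) + colCount r p (twin G v u) := by
  classical
  rw [colCount_eq_sum p huv hadj, colCount_twin p huv, colCount_twin p huv.symm,
    deleteIncidenceSet_comm G v u, Finset.mul_sum, ← Finset.sum_add_distrib]
  gcongr with τ
  rw [← mul_assoc]
  exact two_mul_le_add_sq _ _

end Symmetrization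

theorem toLex_lt_or_toLex_lt {a a₁ a₂ b b₁ b₂ : ℕ} (ha : 2 * a ≤ a₁ + a₂)
    (hb : 2 * b < b₁ + b₂) :
    toLex (a, b) < toLex (a₁, b₁) ∨ toLex (a, b) < toLex (a₂, b₂) := by
  simp only [Prod.Lex.toLex_lt_toLex]
  omega

theorem exists_lt_of_not_isCompleteMultipartite [Fintype V] [DecidableEq V] [NeZero r]
    (p : Fin k → Fin k → Fin s) {G : SimpleGraph V} (hG : ¬G.IsCompleteMultipartite) :
    ∃ H : SimpleGraph V,
      toLex (colCount r p G, degreeSqSum G) < toLex (colCount r p H, degreeSqSum H) := by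
  obtain ⟨a, b, c, hab, hbc, hac⟩ : ∃ a b c, ¬G.Adj a b ∧ ¬G.Adj b c ∧ G.Adj a c := by
    by_contra! h
    exact hG ⟨h⟩
  have hba : b ≠ a := by
    rintro rfl
    exact hbc hac
  obtain h | h := toLex_lt_or_toLex_lt (two_mul_colCount_le (r := r) p hba fun h => hab h.symm)
    (two_mul_degreeSqSum_lt (fun h => hab h.symm) hac hbc)
  exacts [⟨_, h⟩, ⟨_, h⟩]

theorem statement0_general (r k : ℕ) (hr : 2 ≤ r)
    (p : Fin k → Fin k → Fin r) (n : ℕ) :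
    ∃ G : SimpleGraph (Fin n), IsCompleteMultipartiteGraph G ∧
      ∀ H : SimpleGraph (Fin n), colCount r p H ≤ colCount r p G := by
  have : NeZero r := ⟨by omega⟩
  obtain ⟨G, hG⟩ := Finite.exists_max fun H : SimpleGraph (Fin n) =>
    toLex (colCount r p H, degreeSqSum H)
  have hmulti : G.IsCompleteMultipartite := by
    by_contra h
    obtain ⟨H, hH⟩ := exists_lt_of_not_isCompleteMultipartite (r := r) p h
    exact (hG H).not_gt hH
  refine ⟨G, hmulti.isCompleteMultipartiteGraph, fun H => ?_⟩
  rcases Prod.Lex.toLex_le_toLex.mp (hG H) with h | h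
  exacts [h.le, h.1.le]

/-- For any `r ≥ 2`, `k ≥ 3`, any `r`-pattern of `K_k` (a partition of the edges of `K_k`
into at most `r` classes, encoded by a symmetric class map `p`), and any `n`, there is a
complete multipartite graph on `n` vertices that is `(r,p)`-extremal. -/
theorem statement0 (r k : ℕ) (hr : 2 ≤ r) (hk : 3 ≤ k)
    (p : Fin k → Fin k → Fin r) (hpsymm : ∀ i j, p i j = p j i) (n : ℕ) :
    ∃ G : SimpleGraph (Fin n), IsCompleteMultipartiteGraph G ∧
      ∀ H : SimpleGraph (Fin n), colCount r p H ≤ colCount r p G :=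
  statement0_general r k hr p n
end

section
/- Let F̂ be an r-pattern of K_k, let H be an induced subgraph of a graph G such that S = V(G) − V(H) is an independent set in G, and let Ĥ be an F̂-free r-edge-coloring of H. Then c(G | Ĥ) = ∏_{v∈S} c(v, Ĥ). -/
open SimpleGraph

/-- `c(G | Ĥ)`: the number of ways to extend the `p`-free coloring `c0` of the subgraph of
`G` induced on `A` to a `p`-free `r`-edge-coloring of all of `G`. -/
noncomputable def condCount {V : Type*} {k s : ℕ} (r : ℕ) (p : Fin k → Fin k → Fin s)
    (G : SimpleGraph V) (A : Set V) (c0 : V → V → Fin r) : ℕ :=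
  Nat.card {c : V → V → Fin r // IsEdgeColoring G c ∧ ¬ ContainsPattern G p c ∧
    ∀ x y, x ∈ A → y ∈ A → c x y = c0 x y}

/-- `c(v, Ĥ)`: the number of ways to color the edges of `G` between the vertex `v` and `A`
so that the resulting coloring of the subgraph of `G` induced on `A ∪ {v}` (extending the
coloring `c0` of the part induced on `A`) is `p`-free. -/
noncomputable def vertExtCount {V : Type*} {k s : ℕ} (r : ℕ) (p : Fin k → Fin k → Fin s)
    (G : SimpleGraph V) (A : Set V) (v : V) (c0 : V → V → Fin r) : ℕ :=
  Nat.card {c : V → V → Fin r //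
    (∀ x y, c x y = c y x) ∧
    (∀ x y, ¬ (G.Adj x y ∧ x ∈ insert v A ∧ y ∈ insert v A) → (c x y).1 = 0) ∧
    (∀ x y, x ∈ A → y ∈ A → c x y = c0 x y) ∧
    ¬ ContainsPatternOn G (insert v A) p c}

/-! An edge of a copy of `K_k` has at least one end in `A`, since `V - A` is independent, so every
copy has at most one vertex outside `A` and lives inside `A ∪ {v}` for some `v ∉ A`. Hence a
coloring extending `c0` is `p`-free if and only if each of its restrictions to `A ∪ {v}`, `v ∉ A`,
is; and since no edge joins two vertices outside `A`, a coloring extending `c0` is exactly a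
family of independent colorings of the stars between each `v ∉ A` and `A`. -/

section Patterns

variable {V : Type*} {k r s : ℕ} {G : SimpleGraph V} {p : Fin k → Fin k → Fin s}

theorem ContainsPatternOn.mono {A B : Set V} {c : V → V → Fin r}
    (h : ContainsPatternOn G A p c) (hAB : A ⊆ B) : ContainsPatternOn G B p c :=
  let ⟨f, hfA, hf⟩ := h
  ⟨f, fun i => hAB (hfA i), hf⟩

theorem containsPatternOn_congr {A : Set V} {c c' : V → V → Fin r}
    (h : ∀ x ∈ A, ∀ y ∈ A, c x y = c' x y) :
    ContainsPatternOn G A p c ↔ ContainsPatternOn G A p c' := by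
  refine exists_congr fun f => and_congr_right fun hfA => ?_
  simp only [h _ (hfA _) _ (hfA _)]

theorem ContainsPattern.containsPatternOn_or_insert {A : Set V} {c : V → V → Fin r}
    (hind : ∀ u v, u ∉ A → v ∉ A → ¬ G.Adj u v) (h : ContainsPattern G p c) :
    ContainsPatternOn G A p c ∨ ∃ v ∉ A, ContainsPatternOn G (insert v A) p c := by
  obtain ⟨f, -, hf⟩ := h
  by_cases hall : ∀ i, f i ∈ A
  · exact .inl ⟨f, hall, hf⟩
  push Not at hall
  obtain ⟨i₀, hi₀⟩ := hall
  have hmem : ∀ i, f i ∈ insert (f i₀) A := by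
    intro i
    by_cases hi : i = i₀
    · exact hi ▸ Set.mem_insert _ _
    · by_contra hfi
      exact hind _ _ (fun h => hfi (Set.mem_insert_of_mem _ h)) hi₀ (hf.2.1 i i₀ hi)
  exact .inr ⟨f i₀, hi₀, f, hmem, hf⟩

end Patterns

section Extensions

variable {V : Type*} {k r s : ℕ} {G : SimpleGraph V} {p : Fin k → Fin k → Fin s}

abbrev GlobalExtension (r : ℕ) (p : Fin k → Fin k → Fin s) (G : SimpleGraph V) (A : Set V)
    (c₀ : V → V → Fin r) : Type _ :=
  {c : V → V → Fin r // IsEdgeColoring G c ∧ ¬ ContainsPattern G p c ∧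
    ∀ x y, x ∈ A → y ∈ A → c x y = c₀ x y}

abbrev VertexExtension (r : ℕ) (p : Fin k → Fin k → Fin s) (G : SimpleGraph V) (A : Set V)
    (v : V) (c₀ : V → V → Fin r) : Type _ :=
  {c : V → V → Fin r //
    (∀ x y, c x y = c y x) ∧
    (∀ x y, ¬ (G.Adj x y ∧ x ∈ insert v A ∧ y ∈ insert v A) → (c x y).1 = 0) ∧
    (∀ x y, x ∈ A → y ∈ A → c x y = c₀ x y) ∧
    ¬ ContainsPatternOn G (insert v A) p c}

variable {A : Set V} {c₀ : V → V → Fin r}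

variable (A c₀) in
open Classical in
noncomputable def glueColorings (cf : {v // v ∉ A} → V → V → Fin r) : V → V → Fin r :=
  fun x y =>
    if hx : x ∈ A then
      if hy : y ∈ A then c₀ x y else cf ⟨y, hy⟩ x y
    else cf ⟨x, hx⟩ x y

theorem glueColorings_of_mem {cf : {v // v ∉ A} → V → V → Fin r} {x y : V} (hx : x ∈ A)
    (hy : y ∈ A) : glueColorings A c₀ cf x y = c₀ x y := by
  simp [glueColorings, hx, hy]

theorem glueColorings_of_mem_insert {cf : {v // v ∉ A} → V → V → Fin r} {v : {v // v ∉ A}}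
    (hv : ∀ x y, x ∈ A → y ∈ A → cf v x y = c₀ x y) {x y : V}
    (hx : x ∈ insert v.1 A) (hy : y ∈ insert v.1 A) :
    glueColorings A c₀ cf x y = cf v x y := by
  rcases hx with rfl | hx
  · simp [glueColorings, v.2]
  rcases hy with rfl | hy
  · simp [glueColorings, hx, v.2]
  · rw [glueColorings_of_mem hx hy, hv x y hx hy]

theorem isEdgeColoring_glueColorings (hind : ∀ u v, u ∉ A → v ∉ A → ¬ G.Adj u v)
    (hc₀symm : ∀ x y, c₀ x y = c₀ y x)
    (hc₀supp : ∀ x y, ¬ (G.Adj x y ∧ x ∈ A ∧ y ∈ A) → (c₀ x y).1 = 0)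
    (cf : ∀ v : {v // v ∉ A}, VertexExtension r p G A v c₀) :
    IsEdgeColoring G (glueColorings A c₀ fun v => (cf v).1) := by
  refine ⟨fun x y => ?_, fun x y hxy => ?_⟩
  · by_cases hx : x ∈ A <;> by_cases hy : y ∈ A <;>
      simp only [glueColorings, hx, hy, dite_true, dite_false]
    · exact hc₀symm x y
    · exact (cf ⟨y, hy⟩).2.1 x y
    · exact (cf ⟨x, hx⟩).2.1 x y
    · exact Fin.ext <| ((cf ⟨x, hx⟩).2.2.1 x y fun h => hind x y hx hy h.1).trans
        ((cf ⟨y, hy⟩).2.2.1 y x fun h => hind y x hy hx h.1).symm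
  · unfold glueColorings
    split_ifs with hx hy
    · exact hc₀supp x y fun h => hxy h.1
    · exact (cf ⟨y, hy⟩).2.2.1 x y fun h => hxy h.1
    · exact (cf ⟨x, hx⟩).2.2.1 x y fun h => hxy h.1

theorem not_containsPattern_glueColorings (hind : ∀ u v, u ∉ A → v ∉ A → ¬ G.Adj u v)
    (hc₀free : ¬ ContainsPatternOn G A p c₀)
    (cf : ∀ v : {v // v ∉ A}, VertexExtension r p G A v c₀) :
    ¬ ContainsPattern G p (glueColorings A c₀ fun v => (cf v).1) := by
  intro h
  rcases h.containsPatternOn_or_insert hind with hA | ⟨v, hv, hv'⟩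
  · exact hc₀free <| (containsPatternOn_congr fun x hx y hy => glueColorings_of_mem hx hy).mp hA
  · exact (cf ⟨v, hv⟩).2.2.2.2 <| (containsPatternOn_congr fun _ hx _ hy =>
      glueColorings_of_mem_insert (v := ⟨v, hv⟩) (cf ⟨v, hv⟩).2.2.2.1 hx hy).mp hv'

variable [NeZero r]

open Classical in
noncomputable def restrictColoring (B : Set V) (c : V → V → Fin r) : V → V → Fin r :=
  fun x y => if x ∈ B ∧ y ∈ B then c x y else 0

theorem restrictColoring_of_mem {B : Set V} {c : V → V → Fin r} {x y : V} (hx : x ∈ B)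
    (hy : y ∈ B) : restrictColoring B c x y = c x y := by
  simp [restrictColoring, hx, hy]

theorem restrictColoring_of_not_mem {B : Set V} {c : V → V → Fin r} {x y : V}
    (h : ¬ (x ∈ B ∧ y ∈ B)) : restrictColoring B c x y = 0 := by
  simp [restrictColoring, h]

theorem restrictColoring_symm {B : Set V} {c : V → V → Fin r} (hc : ∀ x y, c x y = c y x)
    (x y : V) : restrictColoring B c x y = restrictColoring B c y x := by
  classical
  simp only [restrictColoring, hc x y]
  exact if_congr and_comm rfl rfl

theorem restrictColoring_eq_zero {B : Set V} {c : V → V → Fin r}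
    (hc : ∀ x y, ¬ G.Adj x y → (c x y).1 = 0) (x y : V) (h : ¬ (G.Adj x y ∧ x ∈ B ∧ y ∈ B)) :
    (restrictColoring B c x y).1 = 0 := by
  by_cases hxy : x ∈ B ∧ y ∈ B
  · rw [restrictColoring_of_mem hxy.1 hxy.2]
    exact hc x y fun hadj => h ⟨hadj, hxy⟩
  · rw [restrictColoring_of_not_mem hxy, Fin.val_zero]

noncomputable def GlobalExtension.restrict (c : GlobalExtension r p G A c₀) (v : V) :
    VertexExtension r p G A v c₀ :=
  ⟨restrictColoring (insert v A) c.1, restrictColoring_symm c.2.1.1,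
    restrictColoring_eq_zero c.2.1.2,
    fun x y hx hy => (restrictColoring_of_mem (Set.mem_insert_of_mem _ hx)
      (Set.mem_insert_of_mem _ hy)).trans (c.2.2.2 x y hx hy),
    fun h => c.2.2.1 <| ((containsPatternOn_congr fun _ hx _ hy =>
      restrictColoring_of_mem hx hy).mp h).mono (Set.subset_univ _)⟩

theorem glueColorings_restrictColoring (hind : ∀ u v, u ∉ A → v ∉ A → ¬ G.Adj u v)
    {c : V → V → Fin r} (hc : ∀ x y, ¬ G.Adj x y → (c x y).1 = 0)
    (hcA : ∀ x y, x ∈ A → y ∈ A → c x y = c₀ x y) :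
    glueColorings A c₀ (fun v => restrictColoring (insert v.1 A) c) = c := by
  funext x y
  by_cases hx : x ∈ A
  · by_cases hy : y ∈ A
    · rw [glueColorings_of_mem hx hy, hcA x y hx hy]
    · simp only [glueColorings, hx, hy, dite_true, dite_false]
      exact restrictColoring_of_mem (Set.mem_insert_of_mem _ hx) (Set.mem_insert _ _)
  · simp only [glueColorings, hx, dite_false]
    by_cases hy : y ∈ insert x A
    · exact restrictColoring_of_mem (Set.mem_insert _ _) hy
    · rw [restrictColoring_of_not_mem fun h => hy h.2]
      exact Fin.ext (hc x y (hind x y hx fun h => hy (Set.mem_insert_of_mem _ h))).symm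

theorem restrictColoring_glueColorings (cf : ∀ v : {v // v ∉ A}, VertexExtension r p G A v c₀)
    (v : {v // v ∉ A}) :
    restrictColoring (insert v.1 A) (glueColorings A c₀ fun v => (cf v).1) = (cf v).1 := by
  funext x y
  by_cases hxy : x ∈ insert v.1 A ∧ y ∈ insert v.1 A
  · rw [restrictColoring_of_mem hxy.1 hxy.2]
    exact glueColorings_of_mem_insert (cf v).2.2.2.1 hxy.1 hxy.2
  · rw [restrictColoring_of_not_mem hxy]
    exact Fin.ext ((cf v).2.2.1 x y fun h => hxy h.2).symm

noncomputable def extensionEquiv (hind : ∀ u v, u ∉ A → v ∉ A → ¬ G.Adj u v)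
    (hc₀symm : ∀ x y, c₀ x y = c₀ y x)
    (hc₀supp : ∀ x y, ¬ (G.Adj x y ∧ x ∈ A ∧ y ∈ A) → (c₀ x y).1 = 0)
    (hc₀free : ¬ ContainsPatternOn G A p c₀) :
    GlobalExtension r p G A c₀ ≃ ∀ v : {v // v ∉ A}, VertexExtension r p G A v c₀ where
  toFun c v := c.restrict v
  invFun cf := ⟨glueColorings A c₀ fun v => (cf v).1,
    isEdgeColoring_glueColorings hind hc₀symm hc₀supp cf,
    not_containsPattern_glueColorings hind hc₀free cf,
    fun _ _ hx hy => glueColorings_of_mem hx hy⟩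
  left_inv c := Subtype.ext (glueColorings_restrictColoring hind c.2.1.2 c.2.2.2)
  right_inv cf := funext fun v => Subtype.ext (restrictColoring_glueColorings cf v)

end Extensions

theorem statement3_general {V : Type*} [Fintype V] [DecidableEq V] (r k : ℕ) (hr : 2 ≤ r)
    (p : Fin k → Fin k → Fin r)
    (G : SimpleGraph V) (A : Finset V)
    (hind : ∀ u v : V, u ∉ A → v ∉ A → ¬ G.Adj u v)
    (c0 : V → V → Fin r)
    (hc0symm : ∀ x y, c0 x y = c0 y x)
    (hc0supp : ∀ x y, ¬ (G.Adj x y ∧ x ∈ A ∧ y ∈ A) → (c0 x y).1 = 0)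
    (hc0free : ¬ ContainsPatternOn G (↑A) p c0) :
    condCount r p G (↑A) c0 = ∏ v ∈ Aᶜ, vertExtCount r p G (↑A) v c0 := by
  have : NeZero r := ⟨by omega⟩
  rw [Finset.prod_subtype (p := fun v => v ∉ (A : Set V)) _ fun v => by simp]
  exact (Nat.card_congr (extensionEquiv hind hc0symm hc0supp hc0free)).trans Nat.card_pi

/-- If `H` is the subgraph of `G` induced on `A`, the complement `S = V(G) - A` is an
independent set, and `c0` is a `p`-free `r`-edge-coloring of `H`, then
`c(G | Ĥ) = ∏_{v ∈ S} c(v, Ĥ)`. -/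
theorem statement3 {V : Type*} [Fintype V] [DecidableEq V] (r k : ℕ) (hr : 2 ≤ r) (hk : 3 ≤ k)
    (p : Fin k → Fin k → Fin r) (hpsymm : ∀ i j, p i j = p j i)
    (G : SimpleGraph V) (A : Finset V)
    (hind : ∀ u v : V, u ∉ A → v ∉ A → ¬ G.Adj u v)
    (c0 : V → V → Fin r)
    (hc0symm : ∀ x y, c0 x y = c0 y x)
    (hc0supp : ∀ x y, ¬ (G.Adj x y ∧ x ∈ A ∧ y ∈ A) → (c0 x y).1 = 0)
    (hc0free : ¬ ContainsPatternOn G (↑A) p c0) :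
    condCount r p G (↑A) c0 = ∏ v ∈ Aᶜ, vertExtCount r p G (↑A) v c0 :=
  statement3_general r k hr p G A hind c0 hc0symm hc0supp hc0free
end

section
/- Let G be a graph on t > 1000 vertices, let e₂ be the number of edges of G contained in some triangle of G, let e₃ be the number of edges of G contained in no triangle of G, and let ē be the number of edges of the complement of G. If ē ≤ t²/4, then w(G) = 2^{e₂}·3^{e₃} ≤ 2^{t(t−1)/2}·2^{−0.16·ē}. Furthermore, if ē > t²/4, then w(G) < 3^{t²/4}. -/
/-!
Write `d`, `d̄` and `d₃` for degrees in `G`, in `Gᶜ` and in the graph of edges lying in no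
triangle. Since `e₂ + e₃ + ē = t(t-1)/2` and `3 ≤ 2^(11/6)`, the first bound follows from
`e₃ ≤ 1.008 ē`, because `(11/6 - 1) · 1.008 = 0.84 = 1 - 0.16`.

An edge `uv` lying in no triangle has disjoint neighbourhoods, so `d u + d v ≤ t`, whence
`t (1/d u + 1/d v) ≥ 4`; summing over these edges gives `4 e₃ ≤ t ∑ d₃ v / d v`. On the other
hand `d₃ ≤ d` and `d + d̄ = t - 1` give `(t - 1) d₃ / d ≤ d₃ + d̄`, so
`(t - 1) ∑ d₃ v / d v ≤ 2 e₃ + 2 ē`.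
Together, `(t - 2) e₃ ≤ t ē`.

The second bound is just `w(G) ≤ 3^e(G)` with `e(G) = t(t-1)/2 - ē < t²/4`.
-/

open SimpleGraph

open Classical in
/-- `w(G)`: the product, over all edges `e` of `G`, of the weight of `e`, where an edge
weighs `2` if it lies in some triangle of `G` and `3` otherwise. -/
noncomputable def graphWeight {V : Type*} [Fintype V] (G : SimpleGraph V) : ℕ :=
  ∏ e ∈ G.edgeFinset, if ∃ x, ∀ y ∈ e, G.Adj x y then 2 else 3

/-- The number of edges of `G` lying in some triangle of `G`. -/
noncomputable def triEdgeCount {V : Type*} (G : SimpleGraph V) : ℕ :=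
  {e ∈ G.edgeSet | ∃ x, ∀ y ∈ e, G.Adj x y}.ncard

/-- The number of edges of `G` lying in no triangle of `G`. -/
noncomputable def nonTriEdgeCount {V : Type*} (G : SimpleGraph V) : ℕ :=
  {e ∈ G.edgeSet | ¬ ∃ x, ∀ y ∈ e, G.Adj x y}.ncard

open Finset

lemma four_le_mul_inv_add_inv {p q t : ℝ} (hp : 0 < p) (hq : 0 < q) (h : p + q ≤ t) :
    4 ≤ t * (p⁻¹ + q⁻¹) :=
  calc 4 ≤ (p + q) * (p⁻¹ + q⁻¹) := by
        rw [inv_add_inv hp.ne' hq.ne', mul_div_assoc', le_div_iff₀ (by positivity)]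
        nlinarith [sq_nonneg (p - q)]
    _ ≤ t * (p⁻¹ + q⁻¹) := by gcongr

lemma three_le_two_rpow : (3 : ℝ) ≤ 2 ^ (11 / 6 : ℝ) := by
  have h : (3 : ℝ) ^ 6 ≤ ((2 : ℝ) ^ (11 / 6 : ℝ)) ^ 6 := by
    rw [← Real.rpow_natCast (2 ^ (11 / 6 : ℝ)) 6, ← Real.rpow_mul (by norm_num)]
    norm_num
  exact le_of_pow_le_pow_left₀ (by norm_num) (by positivity) h

lemma two_pow_mul_three_pow_le {a b c : ℕ} (h : (b : ℝ) ≤ 1.008 * c) :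
    (2 : ℝ) ^ a * 3 ^ b ≤ 2 ^ (a + b + c) * (2 : ℝ) ^ (-(0.16 : ℝ) * c) :=
  calc (2 : ℝ) ^ a * 3 ^ b ≤ 2 ^ a * ((2 : ℝ) ^ (11 / 6 : ℝ)) ^ b := by
        gcongr; exact three_le_two_rpow
    _ = (2 : ℝ) ^ ((a : ℝ) + 11 / 6 * b) := by
        rw [Real.rpow_add (by norm_num), Real.rpow_mul (by norm_num), Real.rpow_natCast,
          Real.rpow_natCast]
    _ ≤ (2 : ℝ) ^ (((a + b + c : ℕ) : ℝ) + -(0.16 : ℝ) * c) := by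
        apply Real.rpow_le_rpow_of_exponent_le (by norm_num)
        push_cast
        linarith
    _ = 2 ^ (a + b + c) * (2 : ℝ) ^ (-(0.16 : ℝ) * c) := by
        rw [Real.rpow_add (by norm_num), Real.rpow_natCast]

namespace SimpleGraph

open scoped Classical

variable {V : Type*} (G : SimpleGraph V)

def nonTriangleEdges : SimpleGraph V where
  Adj u v := G.Adj u v ∧ Disjoint (G.neighborSet u) (G.neighborSet v)
  symm := ⟨fun _ _ h => ⟨h.1.symm, h.2.symm⟩⟩
  loopless := ⟨fun _ h => G.irrefl h.1⟩

lemma nonTriangleEdges_le : G.nonTriangleEdges ≤ G := fun _ _ h => h.1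

lemma edgeSet_nonTriangleEdges :
    G.nonTriangleEdges.edgeSet = {e ∈ G.edgeSet | ¬ ∃ x, ∀ y ∈ e, G.Adj x y} := by
  ext e
  induction e with
  | _ u v =>
    simp only [mem_edgeSet, nonTriangleEdges, Set.mem_ofPred_eq, Sym2.forall_mem_pair,
      Set.disjoint_left, mem_neighborSet, not_exists, not_and]
    exact and_congr_right fun _ =>
      ⟨fun h x hu hv => h hu.symm hv.symm, fun h x hu hv => h x hu.symm hv.symm⟩

variable [Fintype V]

lemma triEdgeCount_eq_card_filter :
    triEdgeCount G = #{e ∈ G.edgeFinset | ∃ x, ∀ y ∈ e, G.Adj x y} := by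
  rw [triEdgeCount, ← Set.ncard_coe_finset, coe_filter]
  simp only [mem_edgeFinset]

lemma nonTriEdgeCount_eq_card_filter :
    nonTriEdgeCount G = #{e ∈ G.edgeFinset | ¬ ∃ x, ∀ y ∈ e, G.Adj x y} := by
  rw [nonTriEdgeCount, ← Set.ncard_coe_finset, coe_filter]
  simp only [mem_edgeFinset]

lemma nonTriEdgeCount_eq_card_edgeFinset :
    nonTriEdgeCount G = #G.nonTriangleEdges.edgeFinset := by
  rw [nonTriEdgeCount, ← edgeSet_nonTriangleEdges, ← coe_edgeFinset, Set.ncard_coe_finset]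

lemma graphWeight_eq : graphWeight G = 2 ^ triEdgeCount G * 3 ^ nonTriEdgeCount G := by
  rw [graphWeight, prod_ite, prod_const, prod_const, triEdgeCount_eq_card_filter,
    nonTriEdgeCount_eq_card_filter]

lemma graphWeight_le_three_pow : graphWeight G ≤ 3 ^ #G.edgeFinset :=
  prod_le_pow_card _ _ _ fun _ _ => by split_ifs <;> norm_num

lemma triEdgeCount_add_nonTriEdgeCount : triEdgeCount G + nonTriEdgeCount G = #G.edgeFinset := by
  rw [triEdgeCount_eq_card_filter, nonTriEdgeCount_eq_card_filter]
  exact card_filter_add_card_filter_not _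

lemma card_edgeFinset_add_card_edgeFinset_compl :
    #G.edgeFinset + #Gᶜ.edgeFinset = (Fintype.card V).choose 2 := by
  rw [← card_union_of_disjoint (disjoint_edgeFinset.mpr disjoint_compl_right), ← edgeFinset_sup]
  convert card_edgeFinset_top_eq_card_choose_two (V := V) using 3
  exact sup_compl_eq_top

lemma degree_add_degree_compl (v : V) : G.degree v + Gᶜ.degree v + 1 = Fintype.card V := by
  have := G.degree_lt_card_verts v
  rw [degree_compl]
  omega

lemma degree_add_degree_le_card_of_adj_nonTriangleEdges {u v : V}
    (h : G.nonTriangleEdges.Adj u v) : G.degree u + G.degree v ≤ Fintype.card V := by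
  rw [← card_neighborFinset_eq_degree, ← card_neighborFinset_eq_degree,
    ← card_union_of_disjoint (Finset.disjoint_left.mpr fun _ hu hv => Set.disjoint_left.mp h.2
      ((G.mem_neighborFinset _ _).mp hu) ((G.mem_neighborFinset _ _).mp hv))]
  exact card_le_univ _

lemma sum_dart_fst_eq_sum_degree_nsmul {M : Type*} [AddCommMonoid M] (H : SimpleGraph V)
    (f : V → M) : ∑ d : H.Dart, f d.fst = ∑ v, H.degree v • f v := by
  rw [← sum_fiberwise' univ (fun d : H.Dart => d.fst) f]
  refine sum_congr rfl fun v _ => ?_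
  rw [sum_const]
  congr 1
  convert H.dart_fst_fiber_card_eq_degree v

lemma sum_dart_snd_eq_sum_dart_fst {M : Type*} [AddCommMonoid M] (H : SimpleGraph V)
    (f : V → M) : ∑ d : H.Dart, f d.snd = ∑ d : H.Dart, f d.fst :=
  Equiv.sum_comp (Dart.symm_involutive.toPerm _) fun d => f d.fst

lemma four_mul_card_edgeFinset_nonTriangleEdges_le :
    4 * (#G.nonTriangleEdges.edgeFinset : ℝ) ≤
      Fintype.card V * ∑ v, (G.nonTriangleEdges.degree v : ℝ) / G.degree v := by
  set F := G.nonTriangleEdges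
  have hdart (d : F.Dart) :
      4 ≤ (Fintype.card V : ℝ) * ((G.degree d.fst : ℝ)⁻¹ + (G.degree d.snd : ℝ)⁻¹) := by
    have hfst : 0 < G.degree d.fst := G.degree_pos_iff_exists_adj _ |>.mpr ⟨_, d.adj.1⟩
    have hsnd : 0 < G.degree d.snd := G.degree_pos_iff_exists_adj _ |>.mpr ⟨_, d.adj.1.symm⟩
    exact four_le_mul_inv_add_inv (by positivity) (by positivity)
      (by exact_mod_cast G.degree_add_degree_le_card_of_adj_nonTriangleEdges d.adj)
  have hdouble : ∑ d : F.Dart, ((G.degree d.fst : ℝ)⁻¹ + (G.degree d.snd : ℝ)⁻¹) =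
      2 * ∑ v, (F.degree v : ℝ) / G.degree v := by
    rw [sum_add_distrib, sum_dart_snd_eq_sum_dart_fst F fun v => (G.degree v : ℝ)⁻¹,
      sum_dart_fst_eq_sum_degree_nsmul F fun v => (G.degree v : ℝ)⁻¹]
    simp only [nsmul_eq_mul, div_eq_mul_inv]
    ring
  have hcard : (Fintype.card F.Dart : ℝ) = 2 * #F.edgeFinset := by
    exact_mod_cast F.dart_card_eq_twice_card_edges
  have hsum := card_nsmul_le_sum univ _ _ fun d _ => hdart d
  rw [← mul_sum, hdouble, nsmul_eq_mul, card_univ, hcard] at hsum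
  linarith

lemma mul_degree_nonTriangleEdges_div_degree_le (v : V) :
    ((Fintype.card V : ℝ) - 1) * (G.nonTriangleEdges.degree v / G.degree v) ≤
      G.nonTriangleEdges.degree v + Gᶜ.degree v := by
  set F := G.nonTriangleEdges
  have hle : F.degree v ≤ G.degree v := degree_le_of_le G.nonTriangleEdges_le
  have hcard : (Fintype.card V : ℝ) - 1 = G.degree v + Gᶜ.degree v := by
    rw [← G.degree_add_degree_compl v]
    push_cast
    ring
  rcases (G.degree v).eq_zero_or_pos with h0 | hpos
  · rw [h0, Nat.cast_zero, div_zero, mul_zero]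
    positivity
  · calc ((Fintype.card V : ℝ) - 1) * (F.degree v / G.degree v)
        = F.degree v + Gᶜ.degree v * (F.degree v / G.degree v) := by
          rw [hcard]
          field_simp
      _ ≤ F.degree v + Gᶜ.degree v * 1 := by
          gcongr
          exact div_le_one_of_le₀ (by exact_mod_cast hle) (by positivity)
      _ = F.degree v + Gᶜ.degree v := by rw [mul_one]

lemma card_sub_two_mul_card_edgeFinset_nonTriangleEdges_le :
    ((Fintype.card V : ℝ) - 2) * #G.nonTriangleEdges.edgeFinset ≤
      Fintype.card V * #Gᶜ.edgeFinset := by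
  set S := ∑ v, (G.nonTriangleEdges.degree v : ℝ) / G.degree v
  have hlow := G.four_mul_card_edgeFinset_nonTriangleEdges_le
  have hhigh : ((Fintype.card V : ℝ) - 1) * S ≤
      2 * #G.nonTriangleEdges.edgeFinset + 2 * #Gᶜ.edgeFinset := by
    rw [mul_sum]
    calc _ ≤ ∑ v, ((G.nonTriangleEdges.degree v : ℝ) + Gᶜ.degree v) :=
          sum_le_sum fun v _ => G.mul_degree_nonTriangleEdges_div_degree_le v
      _ = _ := by
          rw [sum_add_distrib]
          exact_mod_cast congrArg₂ (· + ·) G.nonTriangleEdges.sum_degrees_eq_twice_card_edges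
            Gᶜ.sum_degrees_eq_twice_card_edges
  rcases (Fintype.card V).eq_zero_or_pos with h0 | hpos
  · simp only [h0, CharP.cast_eq_zero, zero_mul] at hlow ⊢
    linarith
  · have ht : (1 : ℝ) ≤ Fintype.card V := by exact_mod_cast hpos
    nlinarith [mul_le_mul_of_nonneg_left hlow (by linarith : (0 : ℝ) ≤ Fintype.card V - 1),
      mul_le_mul_of_nonneg_left hhigh (by linarith : (0 : ℝ) ≤ Fintype.card V)]

lemma nonTriEdgeCount_le_mul_card_edgeFinset_compl (ht : 252 ≤ Fintype.card V) :
    (nonTriEdgeCount G : ℝ) ≤ 1.008 * #Gᶜ.edgeFinset := by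
  have hkey := G.card_sub_two_mul_card_edgeFinset_nonTriangleEdges_le
  rw [← nonTriEdgeCount_eq_card_edgeFinset] at hkey
  have htR : (252 : ℝ) ≤ Fintype.card V := by exact_mod_cast ht
  have hC : (0 : ℝ) ≤ #Gᶜ.edgeFinset := by positivity
  nlinarith

end SimpleGraph

/-- Let `G` be a graph on `t > 1000` vertices, `e₂` its number of edges in some triangle,
`e₃` its number of edges in no triangle, and `ē` the number of edges of its complement.
If `ē ≤ t²/4` then `w(G) = 2^e₂ · 3^e₃ ≤ 2^(t(t-1)/2) · 2^(-0.16·ē)`; furthermore, if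
`ē > t²/4` then `w(G) < 3^(t²/4)`. -/
theorem statement9 {V : Type*} [Fintype V] (G : SimpleGraph V)
    (ht : 1000 < Fintype.card V) :
    (((Gᶜ.edgeSet.ncard : ℝ) ≤ (Fintype.card V : ℝ) ^ 2 / 4) →
      (graphWeight G : ℝ) = 2 ^ triEdgeCount G * 3 ^ nonTriEdgeCount G ∧
      (graphWeight G : ℝ) ≤
        2 ^ (Fintype.card V * (Fintype.card V - 1) / 2) *
          (2 : ℝ) ^ (-(0.16 : ℝ) * (Gᶜ.edgeSet.ncard : ℝ))) ∧
    (((Gᶜ.edgeSet.ncard : ℝ) > (Fintype.card V : ℝ) ^ 2 / 4) →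
      (graphWeight G : ℝ) < (3 : ℝ) ^ ((Fintype.card V : ℝ) ^ 2 / 4)) := by
  classical
  have hedges := G.card_edgeFinset_add_card_edgeFinset_compl
  rw [← coe_edgeFinset, Set.ncard_coe_finset]
  refine ⟨fun _ => ⟨by exact_mod_cast G.graphWeight_eq, ?_⟩, fun hdense => ?_⟩
  · rw [G.graphWeight_eq, ← Nat.choose_two_right, ← hedges,
      ← G.triEdgeCount_add_nonTriEdgeCount]
    push_cast
    exact two_pow_mul_three_pow_le (G.nonTriEdgeCount_le_mul_card_edgeFinset_compl (by omega))
  · have hsparse : (#G.edgeFinset : ℝ) < (Fintype.card V : ℝ) ^ 2 / 4 := by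
      have h := congrArg (Nat.cast : ℕ → ℝ) hedges
      rw [Nat.cast_choose_two] at h
      push_cast at h
      nlinarith [(Fintype.card V).cast_nonneg (α := ℝ)]
    calc (graphWeight G : ℝ) ≤ (3 : ℝ) ^ #G.edgeFinset := by
          exact_mod_cast G.graphWeight_le_three_pow
      _ = (3 : ℝ) ^ (#G.edgeFinset : ℝ) := (Real.rpow_natCast _ _).symm
      _ < _ := Real.rpow_lt_rpow_of_exponent_lt (by norm_num) hsparse
end

section
/- For every δ > 0 there exists n₀ such that for every graph G on n > n₀ vertices, the number of 3-edge-colorings of G containing no rainbow triangle satisfies c_{3,F̂₃}(G) ≤ 2^{(1+δ)·n²/2}. -/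
/-!
Build the colouring one vertex at a time. Remove from the current vertex set `S` a vertex `w` of
minimum degree `d` in `G[S]`, and let `e = |S| - 1`. A rainbow-free colouring of `G[S]` is
determined by its restriction to `S \ {w}` together with the colours of the `d` edges at `w`.
If `3 ^ d ≤ 2 ^ e` these colours are counted trivially. Otherwise `e ≤ 2d`, and the colours at
`w` can be recovered from the restriction and a pair `(X, Y)` of subsets of the neighbourhood
`N(w)` with no vertex and no edge between `X` and `Y`. By minimality of `d`, every vertex of
`N(w)` has at most `e - d` non-neighbours in `N(w)`; fixing one vertex of `X` and one of `Y`
bounds the number of such pairs by `(d² + 2) 2 ^ e`. So every step costs a factor at most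
`(|S|² + 2) 2 ^ (|S| - 1)`, and in total there are at most `(n² + 2) ^ n 2 ^ (n choose 2)`
rainbow-free colourings, which is `2 ^ ((1 + o(1)) n² / 2)`.
-/

open SimpleGraph

/-- The rainbow pattern `F̂₃` of `K_3`: every edge is in its own class (for distinct `i, j`,
the values `0+1`, `0+2`, `1+2` in `Fin 3` are pairwise distinct). -/
def rainbowPat : Fin 3 → Fin 3 → Fin 3 := fun i j => i + j

open Finset
open scoped Classical

variable {V : Type*}

structure IsRainbowFreeOn (G : SimpleGraph V) (S : Finset V) (c : V → V → Fin 3) : Prop where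
  symm : ∀ u v, c u v = c v u
  eq_zero : ∀ u v, ¬(u ∈ S ∧ v ∈ S ∧ G.Adj u v) → c u v = 0
  not_rainbow : ∀ u ∈ S, ∀ v ∈ S, ∀ x ∈ S, G.Adj u v → G.Adj u x → G.Adj v x →
    c u v = c u x ∨ c u v = c v x ∨ c u x = c v x

noncomputable def rainbowFreeCount (G : SimpleGraph V) (S : Finset V) : ℕ :=
  Nat.card {c : V → V → Fin 3 // IsRainbowFreeOn G S c}

noncomputable def nbrsIn (G : SimpleGraph V) (S : Finset V) (w : V) : Finset V :=
  S.filter (G.Adj w)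

noncomputable def eraseVertex (w : V) (c : V → V → Fin 3) : V → V → Fin 3 :=
  fun u v => if u = w ∨ v = w then 0 else c u v

section Extension

variable {G : SimpleGraph V} {S : Finset V} {w u v : V} {c c' : V → V → Fin 3}

lemma mem_nbrsIn : u ∈ nbrsIn G S w ↔ u ∈ S ∧ G.Adj w u := mem_filter

lemma ne_of_mem_nbrsIn (hu : u ∈ nbrsIn G S w) : u ≠ w :=
  (mem_nbrsIn.1 hu).2.ne.symm

lemma eraseVertex_apply_of_ne (hu : u ≠ w) (hv : v ≠ w) : eraseVertex w c u v = c u v := by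
  simp [eraseVertex, hu, hv]

lemma IsRainbowFreeOn.erase (hc : IsRainbowFreeOn G S c) :
    IsRainbowFreeOn G (S.erase w) (eraseVertex w c) where
  symm u v := by
    by_cases hu : u = w <;> by_cases hv : v = w <;> simp [eraseVertex, hu, hv, hc.symm u v]
  eq_zero u v h := by
    by_cases huv : u = w ∨ v = w
    · simp [eraseVertex, huv]
    rw [not_or] at huv
    rw [eraseVertex_apply_of_ne huv.1 huv.2]
    exact hc.eq_zero u v fun ⟨hu, hv, hadj⟩ ↦
      h ⟨mem_erase.2 ⟨huv.1, hu⟩, mem_erase.2 ⟨huv.2, hv⟩, hadj⟩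
  not_rainbow u hu v hv x hx huv hux hvx := by
    rw [mem_erase] at hu hv hx
    rw [eraseVertex_apply_of_ne hu.1 hv.1, eraseVertex_apply_of_ne hu.1 hx.1,
      eraseVertex_apply_of_ne hv.1 hx.1]
    exact hc.not_rainbow u hu.2 v hv.2 x hx.2 huv hux hvx

lemma IsRainbowFreeOn.eq_zero_of_notMem_nbrsIn (hc : IsRainbowFreeOn G S c)
    (hu : u ∉ nbrsIn G S w) : c w u = 0 :=
  hc.eq_zero w u fun ⟨_, huS, hadj⟩ ↦ hu (mem_nbrsIn.2 ⟨huS, hadj⟩)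

lemma IsRainbowFreeOn.ext_of_eraseVertex (hc : IsRainbowFreeOn G S c)
    (hc' : IsRainbowFreeOn G S c') (h : eraseVertex w c = eraseVertex w c')
    (hw : ∀ u ∈ nbrsIn G S w, c w u = c' w u) : c = c' := by
  have hw' : ∀ u, c w u = c' w u := fun u ↦ by
    by_cases hu : u ∈ nbrsIn G S w
    · exact hw u hu
    · rw [hc.eq_zero_of_notMem_nbrsIn hu, hc'.eq_zero_of_notMem_nbrsIn hu]
  funext u v
  by_cases hu : u = w
  · subst hu; exact hw' v
  by_cases hv : v = w
  · subst hv; rw [hc.symm, hc'.symm]; exact hw' u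
  simpa [eraseVertex_apply_of_ne hu hv] using congrFun (congrFun h u) v

lemma rainbowFreeCount_empty (G : SimpleGraph V) : rainbowFreeCount G ∅ = 1 := by
  rw [rainbowFreeCount, Nat.card_eq_one_iff_exists]
  refine ⟨⟨fun _ _ ↦ 0, ⟨fun _ _ ↦ rfl, fun _ _ _ ↦ rfl, by simp⟩⟩, fun c ↦ ?_⟩
  ext u v
  exact congrArg Fin.val (c.2.eq_zero u v (by simp))

lemma rainbowFreeCount_le_mul_card [Finite V] {β : Type*} [Finite β]
    (enc : {c // IsRainbowFreeOn G S c} → β)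
    (henc : ∀ c c', eraseVertex w c.1 = eraseVertex w c'.1 → enc c = enc c' → c = c') :
    rainbowFreeCount G S ≤ rainbowFreeCount G (S.erase w) * Nat.card β := by
  rw [rainbowFreeCount, rainbowFreeCount, ← Nat.card_prod]
  refine Nat.card_le_card_of_injective (fun c ↦ (⟨eraseVertex w c.1, c.2.erase⟩, enc c))
    fun c c' h ↦ ?_
  rw [Prod.mk.injEq, Subtype.mk.injEq] at h
  exact henc c c' h.1 h.2

lemma rainbowFreeCount_le_mul_three_pow [Finite V] :
    rainbowFreeCount G S ≤ rainbowFreeCount G (S.erase w) * 3 ^ #(nbrsIn G S w) := by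
  have := rainbowFreeCount_le_mul_card (w := w)
    (fun (c : {c // IsRainbowFreeOn G S c}) (u : nbrsIn G S w) ↦ c.1 w u)
    fun c c' h hw ↦ Subtype.ext (c.2.ext_of_eraseVertex c'.2 h fun u hu ↦ congrFun hw ⟨u, hu⟩)
  simpa [Nat.card_fun] using this

end Extension

section Encoding

/-! Suppose `c w u ≠ 2`. For a triangle `w u v` with `c u v = 2` not to be rainbow, `c w v = c w u`
whenever also `c w v ≠ 2`; so the colours `0, 1` at `w` are constant along the `TwoReach`
classes. If `c w v = 2` and `c u v ≠ 2`, then `c w u = c u v` is forced. The set `encX`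
records which of the classes without forced vertices get colour `0`, and `encY` those
vertices of colour `2` that are not ends of `2`-coloured edges leaving `encX`. -/

variable (G : SimpleGraph V) (S : Finset V) (w : V) (c : V → V → Fin 3)

def TwoEdge (u v : V) : Prop :=
  u ∈ nbrsIn G S w ∧ v ∈ nbrsIn G S w ∧ c w u ≠ 2 ∧ c w v ≠ 2 ∧ G.Adj u v ∧ c u v = 2

def TwoReach : V → V → Prop :=
  Relation.ReflTransGen (TwoEdge G S w c)

noncomputable def unforcedSet : Finset V :=
  (nbrsIn G S w).filter fun u ↦
    c w u ≠ 2 ∧ ∀ v ∈ nbrsIn G S w, G.Adj u v → c w v = 2 → c u v = 2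

noncomputable def encX : Finset V :=
  (nbrsIn G S w).filter fun u ↦ c w u = 0 ∧ ∀ v, TwoReach G S w c u v → v ∈ unforcedSet G S w c

noncomputable def boundaryX : Finset V :=
  (nbrsIn G S w).filter fun v ↦ v ∉ encX G S w c ∧ ∃ x ∈ encX G S w c, G.Adj v x ∧ c v x = 2

noncomputable def encY : Finset V :=
  (nbrsIn G S w).filter (fun u ↦ c w u = 2) \ boundaryX G S w c

variable {G S w c} {c' : V → V → Fin 3} {u v : V}

lemma TwoEdge.colorAt_eq (hwS : w ∈ S) (hc : IsRainbowFreeOn G S c) (h : TwoEdge G S w c u v) :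
    c w u = c w v := by
  obtain ⟨hu, hv, hu2, hv2, hadj, huv⟩ := h
  rw [mem_nbrsIn] at hu hv
  rcases hc.not_rainbow w hwS u hu.1 v hv.1 hu.2 hv.2 hadj with h | h | h
  · exact h
  · exact absurd (h.trans huv) hu2
  · exact absurd (h.trans huv) hv2

lemma TwoReach.colorAt_eq (hwS : w ∈ S) (hc : IsRainbowFreeOn G S c)
    (h : TwoReach G S w c u v) : c w u = c w v := by
  induction h with
  | refl => rfl
  | tail _ hstep ih => exact ih.trans (hstep.colorAt_eq hwS hc)

lemma TwoReach.mem_nbrsIn (h : TwoReach G S w c u v) (hu : u ∈ nbrsIn G S w) :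
    v ∈ nbrsIn G S w := by
  induction h with
  | refl => exact hu
  | tail _ hstep _ => exact hstep.2.1

lemma colorAt_eq_of_forced (hwS : w ∈ S) (hc : IsRainbowFreeOn G S c) (hu : u ∈ nbrsIn G S w)
    (hv : v ∈ nbrsIn G S w) (hadj : G.Adj u v) (hu2 : c w u ≠ 2) (hv2 : c w v = 2)
    (huv : c u v ≠ 2) : c w u = c u v := by
  rw [mem_nbrsIn] at hu hv
  rcases hc.not_rainbow w hwS u hu.1 v hv.1 hu.2 hv.2 hadj with h | h | h
  · exact absurd (h.trans hv2) hu2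
  · exact h
  · exact absurd (hv2.symm.trans h) huv.symm

lemma exists_forcing_of_notMem_unforcedSet (hu : u ∈ nbrsIn G S w) (hu2 : c w u ≠ 2)
    (h : u ∉ unforcedSet G S w c) :
    ∃ v ∈ nbrsIn G S w, G.Adj u v ∧ c w v = 2 ∧ c u v ≠ 2 := by
  simpa [unforcedSet, hu, hu2] using h

lemma colorAt_eq_two_of_mem_boundaryX (hwS : w ∈ S) (hc : IsRainbowFreeOn G S c)
    (hv : v ∈ boundaryX G S w c) : c w v = 2 := by
  obtain ⟨hvN, hvX, x, hxX, hadj, hvx⟩ := mem_filter.1 hv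
  obtain ⟨hxN, hx0, hxR⟩ := mem_filter.1 hxX
  by_contra hv2
  have hreach : TwoReach G S w c x v :=
    .single ⟨hxN, hvN, by rw [hx0]; decide, hv2, hadj.symm, by rw [hc.symm]; exact hvx⟩
  exact hvX (mem_filter.2 ⟨hvN, hreach.colorAt_eq hwS hc ▸ hx0, fun z hz ↦ hxR z (hreach.trans hz)⟩)

lemma colorAt_eq_two_iff (hwS : w ∈ S) (hc : IsRainbowFreeOn G S c) (hu : u ∈ nbrsIn G S w) :
    c w u = 2 ↔ u ∈ boundaryX G S w c ∪ encY G S w c := by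
  by_cases hB : u ∈ boundaryX G S w c
  · simp [hB, colorAt_eq_two_of_mem_boundaryX hwS hc hB]
  · simp [encY, hB, hu]

lemma disjoint_and_not_adj_of_mem_encX_of_mem_encY {x y : V} (hc : IsRainbowFreeOn G S c)
    (hx : x ∈ encX G S w c) (hy : y ∈ encY G S w c) : x ≠ y ∧ ¬G.Adj x y := by
  obtain ⟨hy2, hyB⟩ := mem_sdiff.1 hy
  obtain ⟨hyN, hy2⟩ := mem_filter.1 hy2
  obtain ⟨hxN, hx0, hxR⟩ := mem_filter.1 hx
  refine ⟨by rintro rfl; simp [hx0] at hy2,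
    fun hadj ↦ hyB (mem_filter.2 ⟨hyN, ?_, x, hx, hadj.symm, ?_⟩)⟩
  · intro hyX
    simp [(mem_filter.1 hyX).2.1] at hy2
  · rw [hc.symm]
    exact (mem_filter.1 (hxR x .refl)).2.2 y hyN hadj hy2

lemma Fin.eq_of_ne_two_of_eq_zero_iff {a b : Fin 3} (ha : a ≠ 2) (hb : b ≠ 2)
    (h : a = 0 ↔ b = 0) : a = b := by
  revert a b
  decide

section Congr

variable (hN : ∀ u ∈ nbrsIn G S w, ∀ v ∈ nbrsIn G S w, c u v = c' u v)
include hN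

lemma boundaryX_congr (hX : encX G S w c = encX G S w c') :
    boundaryX G S w c = boundaryX G S w c' := by
  refine filter_congr fun v hv ↦ ?_
  rw [hX]
  refine and_congr_right fun _ ↦ exists_congr fun x ↦ and_congr_right fun hx ↦ ?_
  rw [hN v hv x (filter_subset _ _ hx)]

variable (h2 : ∀ u ∈ nbrsIn G S w, (c w u = 2 ↔ c' w u = 2))
include h2

lemma twoReach_congr : TwoReach G S w c = TwoReach G S w c' := by
  suffices TwoEdge G S w c = TwoEdge G S w c' by rw [TwoReach, TwoReach, this]
  ext u v
  refine ⟨fun ⟨hu, hv, hu2, hv2, hadj, huv⟩ ↦ ?_, fun ⟨hu, hv, hu2, hv2, hadj, huv⟩ ↦ ?_⟩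
  · exact ⟨hu, hv, (h2 u hu).not.1 hu2, (h2 v hv).not.1 hv2, hadj, hN u hu v hv ▸ huv⟩
  · exact ⟨hu, hv, (h2 u hu).not.2 hu2, (h2 v hv).not.2 hv2, hadj, (hN u hu v hv).symm ▸ huv⟩

lemma unforcedSet_congr : unforcedSet G S w c = unforcedSet G S w c' := by
  refine filter_congr fun u hu ↦ ?_
  rw [ne_eq, ne_eq, h2 u hu]
  refine and_congr_right fun _ ↦ forall₂_congr fun v hv ↦ ?_
  rw [h2 v hv, hN u hu v hv]

end Congr

lemma colorAt_eq_of_enc_eq (hwS : w ∈ S) (hc : IsRainbowFreeOn G S c)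
    (hc' : IsRainbowFreeOn G S c') (hN : ∀ u ∈ nbrsIn G S w, ∀ v ∈ nbrsIn G S w, c u v = c' u v)
    (hX : encX G S w c = encX G S w c') (hY : encY G S w c = encY G S w c')
    (hu : u ∈ nbrsIn G S w) : c w u = c' w u := by
  have h2 : ∀ u ∈ nbrsIn G S w, (c w u = 2 ↔ c' w u = 2) := fun u hu ↦ by
    rw [colorAt_eq_two_iff hwS hc hu, colorAt_eq_two_iff hwS hc' hu, boundaryX_congr hN hX, hY]
  by_cases hu2 : c w u = 2
  · rw [hu2, eq_comm, ← h2 u hu, hu2]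
  have hu2' : c' w u ≠ 2 := (h2 u hu).not.1 hu2
  by_cases hfree : ∀ v, TwoReach G S w c u v → v ∈ unforcedSet G S w c
  · -- an unforced class: the colour is `0` or `1`, as read off from `encX`
    have hfree' : ∀ v, TwoReach G S w c' u v → v ∈ unforcedSet G S w c' := by
      rwa [← twoReach_congr hN h2, ← unforcedSet_congr hN h2]
    have h0 : c w u = 0 ↔ c' w u = 0 := by
      have hX' : u ∈ encX G S w c ↔ u ∈ encX G S w c' := by rw [hX]
      simpa only [encX, mem_filter, hu, true_and, and_iff_left hfree, and_iff_left hfree']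
        using hX'
    exact Fin.eq_of_ne_two_of_eq_zero_iff hu2 hu2' h0
  · obtain ⟨z, hz, hzF⟩ := not_forall₂.1 hfree
    have hzN := hz.mem_nbrsIn hu
    have hcz := hz.colorAt_eq hwS hc
    have hcz' := (twoReach_congr hN h2 ▸ hz : TwoReach G S w c' u z).colorAt_eq hwS hc'
    obtain ⟨v, hvN, hadj, hv2, hzv⟩ :=
      exists_forcing_of_notMem_unforcedSet hzN (hcz ▸ hu2) hzF
    rw [hcz, hcz', colorAt_eq_of_forced hwS hc hzN hvN hadj (hcz ▸ hu2) hv2 hzv,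
      colorAt_eq_of_forced hwS hc' hzN hvN hadj (hcz' ▸ hu2') ((h2 v hvN).1 hv2)
        (hN z hzN v hvN ▸ hzv), hN z hzN v hvN]

end Encoding

section Counting

variable {G : SimpleGraph V} {S N : Finset V} {w y : V}

noncomputable def crossFreePairs (G : SimpleGraph V) (N : Finset V) :
    Finset (Finset V × Finset V) :=
  (N.powerset ×ˢ N.powerset).filter fun p ↦ ∀ x ∈ p.1, ∀ y ∈ p.2, x ≠ y ∧ ¬G.Adj x y

noncomputable def nonNbrsIn (G : SimpleGraph V) (N : Finset V) (y : V) : Finset V :=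
  N.filter fun z ↦ z ≠ y ∧ ¬G.Adj y z

lemma rainbowFreeCount_le_mul_card_crossFreePairs [Finite V] (hwS : w ∈ S) :
    rainbowFreeCount G S ≤
      rainbowFreeCount G (S.erase w) * #(crossFreePairs G (nbrsIn G S w)) := by
  have hmem (c : {c // IsRainbowFreeOn G S c}) :
      (encX G S w c.1, encY G S w c.1) ∈ crossFreePairs G (nbrsIn G S w) := by
    refine mem_filter.2 ⟨mem_product.2 ⟨mem_powerset.2 (filter_subset _ _),
      mem_powerset.2 (sdiff_subset.trans (filter_subset _ _))⟩, fun x hx y hy ↦ ?_⟩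
    exact disjoint_and_not_adj_of_mem_encX_of_mem_encY c.2 hx hy
  rw [← Nat.card_eq_finsetCard]
  refine rainbowFreeCount_le_mul_card (fun c ↦ ⟨_, hmem c⟩) fun c c' h hXY ↦ ?_
  rw [Subtype.mk.injEq, Prod.mk.injEq] at hXY
  have hN : ∀ u ∈ nbrsIn G S w, ∀ v ∈ nbrsIn G S w, c.1 u v = c'.1 u v := fun u hu v hv ↦ by
    simpa [eraseVertex_apply_of_ne (ne_of_mem_nbrsIn hu) (ne_of_mem_nbrsIn hv)] using
      congrFun (congrFun h u) v
  exact Subtype.ext (c.2.ext_of_eraseVertex c'.2 h fun u hu ↦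
    colorAt_eq_of_enc_eq hwS c.2 c'.2 hN hXY.1 hXY.2 hu)

/-- Choosing `x₀ ∈ X` and `y₀ ∈ Y` confines `X` to the non-neighbours of `y₀` and `Y` to those
of `x₀`. -/
lemma card_crossFreePairs_le {U : ℕ} (hU : ∀ y ∈ N, #(nonNbrsIn G N y) ≤ U) :
    #(crossFreePairs G N) ≤ 2 * 2 ^ #N + #N ^ 2 * 4 ^ U := by
  have hsub : crossFreePairs G N ⊆ N.powerset ×ˢ {∅} ∪ {∅} ×ˢ N.powerset ∪
      (N ×ˢ N).biUnion fun q ↦ (nonNbrsIn G N q.2).powerset ×ˢ (nonNbrsIn G N q.1).powerset := by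
    rintro ⟨X, Y⟩ hp
    obtain ⟨hXY, hcross⟩ := mem_filter.1 hp
    obtain ⟨hX, hY⟩ := mem_product.1 hXY
    rw [mem_powerset] at hX hY
    obtain rfl | ⟨y₀, hy₀⟩ := Y.eq_empty_or_nonempty
    · simp [hX]
    obtain rfl | ⟨x₀, hx₀⟩ := X.eq_empty_or_nonempty
    · simp [hY]
    refine mem_union_right _ (mem_biUnion.2 ⟨(x₀, y₀), mem_product.2 ⟨hX hx₀, hY hy₀⟩, ?_⟩)
    refine mem_product.2 ⟨mem_powerset.2 fun z hz ↦ ?_, mem_powerset.2 fun z hz ↦ ?_⟩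
    · exact mem_filter.2 ⟨hX hz, (hcross z hz y₀ hy₀).1, fun h ↦ (hcross z hz y₀ hy₀).2 h.symm⟩
    · exact mem_filter.2 ⟨hY hz, (hcross x₀ hx₀ z hz).1.symm, (hcross x₀ hx₀ z hz).2⟩
  have hpair : ∀ q ∈ N ×ˢ N,
      #((nonNbrsIn G N q.2).powerset ×ˢ (nonNbrsIn G N q.1).powerset) ≤ 4 ^ U := fun q hq ↦ by
    rw [card_product, card_powerset, card_powerset, show 4 = 2 * 2 by rfl, mul_pow]
    exact Nat.mul_le_mul (Nat.pow_le_pow_right two_pos (hU _ (mem_product.1 hq).2))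
      (Nat.pow_le_pow_right two_pos (hU _ (mem_product.1 hq).1))
  calc #(crossFreePairs G N)
      ≤ #(N.powerset ×ˢ {∅}) + #({∅} ×ˢ N.powerset) + ∑ q ∈ N ×ˢ N, 4 ^ U := by
        refine (card_le_card hsub).trans ((card_union_le _ _).trans (add_le_add
          (card_union_le _ _) (card_biUnion_le.trans (sum_le_sum hpair))))
    _ = 2 * 2 ^ #N + #N ^ 2 * 4 ^ U := by simp; ring

/-- When `w` has minimum degree `d` in `G[S]`, a neighbour `y` of `w` has at least `d` neighbours
in `S`, of which at most `|S| - d` lie outside `N(w)`. -/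
lemma card_nonNbrsIn_add_le (hmin : ∀ y ∈ S, #(nbrsIn G S w) ≤ #(nbrsIn G S y))
    (hy : y ∈ nbrsIn G S w) :
    #(nonNbrsIn G (nbrsIn G S w) y) + #(nbrsIn G S w) + 1 ≤ #S := by
  have hNS : nbrsIn G S w ⊆ S := filter_subset _ _
  have hinside : #(nonNbrsIn G (nbrsIn G S w) y) + #(nbrsIn G S y ∩ nbrsIn G S w) + 1 ≤
      #(nbrsIn G S w) := by
    have hdisj : Disjoint (nonNbrsIn G (nbrsIn G S w) y) (nbrsIn G S y ∩ nbrsIn G S w) :=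
      disjoint_left.2 fun z hz hz' ↦ (mem_filter.1 hz).2.2 (mem_nbrsIn.1 (mem_inter.1 hz').1).2
    have hsub : nonNbrsIn G (nbrsIn G S w) y ∪ (nbrsIn G S y ∩ nbrsIn G S w) ⊆
        (nbrsIn G S w).erase y :=
      union_subset (fun z hz ↦ mem_erase.2 ⟨(mem_filter.1 hz).2.1, (mem_filter.1 hz).1⟩)
        fun z hz ↦ mem_erase.2 ⟨ne_of_mem_nbrsIn (mem_inter.1 hz).1, (mem_inter.1 hz).2⟩
    have := card_le_card hsub
    rw [card_union_of_disjoint hdisj, card_erase_of_mem hy] at this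
    have := card_pos.2 ⟨y, hy⟩
    omega
  have houtside : #(nbrsIn G S y \ nbrsIn G S w) ≤ #S - #(nbrsIn G S w) := by
    rw [← card_sdiff_of_subset hNS]
    exact card_le_card (sdiff_subset_sdiff (filter_subset _ _) le_rfl)
  have := card_sdiff_add_card_inter (nbrsIn G S y) (nbrsIn G S w)
  have := card_le_card hNS
  have := hmin y (mem_nbrsIn.1 hy).1
  omega

lemma card_nbrsIn_le_card_erase : #(nbrsIn G S w) ≤ #(S.erase w) :=
  card_le_card fun _ hu ↦ mem_erase.2 ⟨ne_of_mem_nbrsIn hu, (mem_nbrsIn.1 hu).1⟩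

lemma card_crossFreePairs_nbrsIn_le (hwS : w ∈ S)
    (hmin : ∀ y ∈ S, #(nbrsIn G S w) ≤ #(nbrsIn G S y))
    (hdense : #(S.erase w) ≤ 2 * #(nbrsIn G S w)) :
    #(crossFreePairs G (nbrsIn G S w)) ≤ (#S ^ 2 + 2) * 2 ^ #(S.erase w) := by
  have hSe : #S = #(S.erase w) + 1 := (card_erase_add_one hwS).symm
  have hde := card_nbrsIn_le_card_erase (G := G) (S := S) (w := w)
  have hU : ∀ y ∈ nbrsIn G S w, #(nonNbrsIn G (nbrsIn G S w) y) ≤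
      #(S.erase w) - #(nbrsIn G S w) := fun y hy ↦ by
    have := card_nonNbrsIn_add_le hmin hy
    omega
  have h4 : 4 ^ (#(S.erase w) - #(nbrsIn G S w)) ≤ 2 ^ #(S.erase w) := by
    rw [show 4 = 2 ^ 2 by rfl, ← pow_mul]
    exact Nat.pow_le_pow_right two_pos (by omega)
  calc #(crossFreePairs G (nbrsIn G S w))
      ≤ 2 * 2 ^ #(nbrsIn G S w) + #(nbrsIn G S w) ^ 2 * 4 ^ (#(S.erase w) - #(nbrsIn G S w)) :=
        card_crossFreePairs_le hU
    _ ≤ 2 * 2 ^ #(S.erase w) + #S ^ 2 * 2 ^ #(S.erase w) :=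
        add_le_add (Nat.mul_le_mul_left 2 (Nat.pow_le_pow_right two_pos hde))
          (Nat.mul_le_mul (Nat.pow_le_pow_left (by omega) 2) h4)
    _ = (#S ^ 2 + 2) * 2 ^ #(S.erase w) := by ring

end Counting

lemma exists_rainbowFreeCount_le [Finite V] (G : SimpleGraph V) {S : Finset V}
    (hS : S.Nonempty) : ∃ w ∈ S,
      rainbowFreeCount G S ≤ (#S ^ 2 + 2) * 2 ^ #(S.erase w) * rainbowFreeCount G (S.erase w) := by
  obtain ⟨w, hwS, hmin⟩ := exists_min_image S (fun y ↦ #(nbrsIn G S y)) hS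
  refine ⟨w, hwS, ?_⟩
  set d := #(nbrsIn G S w)
  set e := #(S.erase w)
  by_cases hsparse : 3 ^ d ≤ 2 ^ e
  · calc rainbowFreeCount G S ≤ rainbowFreeCount G (S.erase w) * 3 ^ d :=
          rainbowFreeCount_le_mul_three_pow
      _ ≤ rainbowFreeCount G (S.erase w) * ((#S ^ 2 + 2) * 2 ^ e) := by
          gcongr
          exact hsparse.trans (Nat.le_mul_of_pos_left _ (by positivity))
      _ = _ := by ring
  have hed : e ≤ 2 * d := by
    by_contra! h
    refine hsparse ((Nat.pow_le_pow_left (show 3 ≤ 4 by norm_num) d).trans ?_)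
    rw [show 4 = 2 ^ 2 by rfl, ← pow_mul]
    exact Nat.pow_le_pow_right two_pos h.le
  have hpairs := card_crossFreePairs_nbrsIn_le hwS hmin hed
  calc rainbowFreeCount G S
      ≤ rainbowFreeCount G (S.erase w) * #(crossFreePairs G (nbrsIn G S w)) :=
        rainbowFreeCount_le_mul_card_crossFreePairs hwS
    _ ≤ rainbowFreeCount G (S.erase w) * ((#S ^ 2 + 2) * 2 ^ e) := by gcongr
    _ = _ := by ring

theorem rainbowFreeCount_le [Finite V] (G : SimpleGraph V) (S : Finset V) :
    rainbowFreeCount G S ≤ (#S ^ 2 + 2) ^ #S * 2 ^ (#S).choose 2 := by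
  induction S using Finset.strongInduction with
  | H S ih =>
  obtain rfl | hS := S.eq_empty_or_nonempty
  · simp [rainbowFreeCount_empty]
  obtain ⟨w, hwS, hstep⟩ := exists_rainbowFreeCount_le G hS
  have hSe : #S = #(S.erase w) + 1 := (card_erase_add_one hwS).symm
  calc rainbowFreeCount G S
      ≤ (#S ^ 2 + 2) * 2 ^ #(S.erase w) *
          ((#(S.erase w) ^ 2 + 2) ^ #(S.erase w) * 2 ^ (#(S.erase w)).choose 2) :=
        hstep.trans (Nat.mul_le_mul_left _ (ih _ (erase_ssubset hwS)))
    _ ≤ (#S ^ 2 + 2) * 2 ^ #(S.erase w) *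
          ((#S ^ 2 + 2) ^ #(S.erase w) * 2 ^ (#(S.erase w)).choose 2) := by
        gcongr
        exact erase_subset w S
    _ = (#S ^ 2 + 2) ^ #S * 2 ^ (#S).choose 2 := by
        rw [hSe, Nat.choose_succ_succ, Nat.choose_one_right]
        ring

lemma IsEdgeColoring.containsPattern_rainbowPat {G : SimpleGraph V} {c : V → V → Fin 3}
    (hc : IsEdgeColoring G c) {u v x : V} (huv : G.Adj u v) (hux : G.Adj u x)
    (hvx : G.Adj v x) (h₁ : c u v ≠ c u x) (h₂ : c u v ≠ c v x) (h₃ : c u x ≠ c v x) :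
    ContainsPattern G rainbowPat c := by
  have e1 : c v u = c u v := hc.1 v u
  have e2 : c x u = c u x := hc.1 x u
  have e3 : c x v = c v x := hc.1 x v
  have hvu := huv.symm
  have hxu := hux.symm
  have hxv := hvx.symm
  have := huv.ne
  have := hux.ne
  have := hvx.ne
  have := Ne.symm h₁
  have := Ne.symm h₂
  have := Ne.symm h₃
  refine ⟨![u, v, x], fun _ ↦ Set.mem_univ _, fun a b hab ↦ ?_, fun i j hij ↦ ?_, ?_⟩
  · fin_cases a <;> fin_cases b <;> simp_all
  · fin_cases i <;> fin_cases j <;> simp_all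
  · intro i j i' j' hij hij'
    fin_cases i <;> fin_cases j <;> fin_cases i' <;> fin_cases j' <;>
      simp_all [rainbowPat]

lemma colCount_rainbowPat_le [Fintype V] (G : SimpleGraph V) :
    colCount 3 rainbowPat G ≤ rainbowFreeCount G univ := by
  refine Nat.card_le_card_of_injective
    (fun c ↦ ⟨c.1, ⟨c.2.1.1, fun u v h ↦ Fin.ext (c.2.1.2 u v fun hadj ↦ h (by simp [hadj])), ?_⟩⟩)
    fun c c' h ↦ Subtype.ext (by simpa using h)
  intro u _ v _ x _ huv hux hvx
  by_contra! h
  exact c.2.2 (c.2.1.containsPattern_rainbowPat huv hux hvx h.1 h.2.1 h.2.2)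

lemma eventually_sq_add_two_le_pow {r : ℝ} (hr : 1 < r) :
    ∀ᶠ n : ℕ in Filter.atTop, (n : ℝ) ^ 2 + 2 ≤ r ^ n := by
  have hsmall := (isLittleO_pow_const_const_pow_of_one_lt (R := ℝ) 2 hr).def (c := 1 / 2)
    (by norm_num)
  filter_upwards [hsmall, (tendsto_pow_atTop_atTop_of_one_lt hr).eventually_ge_atTop 4]
    with n hn h4
  rw [Real.norm_of_nonneg (by positivity), Real.norm_of_nonneg (by positivity)] at hn
  linarith

/-- For every `δ > 0` there is `n₀` such that every graph `G` on `n > n₀` vertices has at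
most `2 ^ ((1+δ)n²/2)` 3-edge-colorings containing no rainbow triangle. -/
theorem statement11 (δ : ℝ) (hδ : 0 < δ) :
    ∃ n₀ : ℕ, ∀ n : ℕ, n > n₀ → ∀ G : SimpleGraph (Fin n),
      (colCount 3 rainbowPat G : ℝ) ≤ (2 : ℝ) ^ ((1 + δ) * (n : ℝ) ^ 2 / 2) := by
  obtain ⟨n₀, hn₀⟩ := Filter.eventually_atTop.1
    (eventually_sq_add_two_le_pow (Real.one_lt_rpow one_lt_two (half_pos hδ)))
  refine ⟨n₀, fun n hn G ↦ ?_⟩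
  have hcount := (colCount_rainbowPat_le G).trans (rainbowFreeCount_le G univ)
  rw [card_univ, Fintype.card_fin] at hcount
  have hchoose : ((n.choose 2 : ℕ) : ℝ) ≤ (n : ℝ) ^ 2 / 2 := by
    rw [Nat.cast_choose_two]
    nlinarith [n.cast_nonneg (α := ℝ)]
  calc (colCount 3 rainbowPat G : ℝ)
      ≤ ((n : ℝ) ^ 2 + 2) ^ n * (2 : ℝ) ^ ((n.choose 2 : ℕ) : ℝ) := by
        rw [Real.rpow_natCast]
        exact_mod_cast hcount
    _ ≤ (((2 : ℝ) ^ (δ / 2)) ^ n) ^ n * (2 : ℝ) ^ ((n : ℝ) ^ 2 / 2) := by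
        gcongr
        · exact hn₀ n hn.le
        · exact one_le_two
    _ = (2 : ℝ) ^ ((1 + δ) * (n : ℝ) ^ 2 / 2) := by
        rw [← Real.rpow_mul_natCast zero_le_two, ← Real.rpow_mul_natCast zero_le_two,
          ← Real.rpow_add two_pos]
        ring_nf
end

section
/- Let t ≥ 2 and consider the complete graph K_{t+1} on vertices v₁, …, v_{t+1}. For every 3-edge-coloring of the complete graph on {v₁, …, v_t} containing no rainbow triangle, the number of ways to 3-color the t edges from v_{t+1} to {v₁, …, v_t} so that the resulting 3-edge-coloring of K_{t+1} still contains no rainbow triangle is at most t·2^t. -/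
open SimpleGraph

/-!
Call `d : Fin t → Fin 3` admissible for `c` if the new vertex, joined to each `i` by an edge of
color `d i`, spans no rainbow triangle with an edge of `c`. Restricting an admissible tuple to the
first `t - 1` vertices gives an admissible tuple. If the restriction differs at some `j` from the
colors `e` of the edges at the last old vertex `v`, the triangle on `j`, `v` and the new vertex
leaves only two colors for the new edge to `v`; if it equals `e`, there are at most three. Hence
the number `a(t)` of admissible tuples satisfies `a(t) ≤ 2 a(t - 1) + 1`, so `a(t) < 2 ^ (t + 1) ≤ t * 2 ^ t` for `t ≥ 2`.
-/

open Finset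

lemma Fin.card_filter_eq_sum_card_filter_snoc {α : Type*} [Fintype α] [DecidableEq α] {n : ℕ}
    (P : (Fin (n + 1) → α) → Prop) [DecidablePred P] :
    #{d | P d} = ∑ d' : Fin n → α, #{x | P (Fin.snoc d' x)} := by
  rw [card_eq_sum_card_fiberwise (f := Fin.init) (t := univ) (by simp)]
  refine sum_congr rfl fun d' _ => ?_
  refine card_nbij' (fun d => d (Fin.last n)) (fun x => Fin.snoc d' x) ?_ ?_ ?_ ?_
  · intro d hd
    obtain ⟨hd, rfl⟩ := by simpa using hd
    simpa [Fin.snoc_init_self] using hd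
  · intro x hx
    simp_all
  · intro d hd
    obtain ⟨-, rfl⟩ := by simpa using hd
    exact Fin.snoc_init_self d
  · intro x _
    simp

def IsRainbowFreeExtension {ι : Type*} (c : ι → ι → Fin 3) (d : ι → Fin 3) : Prop :=
  ∀ i j, i ≠ j → d i = d j ∨ d i = c i j ∨ d j = c i j

lemma IsRainbowFreeExtension.comp {ι κ : Type*} {c : ι → ι → Fin 3} {d : ι → Fin 3}
    (hd : IsRainbowFreeExtension c d) {f : κ → ι} (hf : Function.Injective f) :
    IsRainbowFreeExtension (fun i j => c (f i) (f j)) (d ∘ f) :=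
  fun i j hij => hd (f i) (f j) (hf.ne hij)

instance {ι : Type*} [Fintype ι] [DecidableEq ι] (c : ι → ι → Fin 3) :
    DecidablePred (IsRainbowFreeExtension c) :=
  fun d => by unfold IsRainbowFreeExtension; infer_instance

section Counting

variable {n : ℕ} (c : Fin (n + 1) → Fin (n + 1) → Fin 3)

lemma card_isRainbowFreeExtension_snoc_le_two {d : Fin n → Fin 3}
    (hd : d ≠ fun j => c j.castSucc (Fin.last n)) :
    #{x | IsRainbowFreeExtension c (Fin.snoc d x)} ≤ 2 := by
  obtain ⟨j, hj⟩ := Function.ne_iff.mp hd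
  calc _ ≤ #({d j, c j.castSucc (Fin.last n)} : Finset (Fin 3)) := by
        refine card_le_card fun x hx => ?_
        simp only [mem_filter, mem_univ, true_and] at hx
        have htri := hx j.castSucc (Fin.last n) (Fin.castSucc_lt_last j).ne
        simp only [Fin.snoc_castSucc, Fin.snoc_last] at htri
        grind
    _ ≤ 2 := card_le_two

lemma card_isRainbowFreeExtension_succ_le :
    #{d | IsRainbowFreeExtension c d} ≤
      2 * #{d | IsRainbowFreeExtension (fun i j : Fin n => c i.castSucc j.castSucc) d} + 1 := by
  set e : Fin n → Fin 3 := fun j => c j.castSucc (Fin.last n)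
  have fiber : ∀ d : Fin n → Fin 3, #{x | IsRainbowFreeExtension c (Fin.snoc d x)} ≤
      (if IsRainbowFreeExtension (fun i j : Fin n => c i.castSucc j.castSucc) d then 2 else 0) +
        if d = e then 1 else 0 := by
    intro d
    by_cases hd : IsRainbowFreeExtension (fun i j : Fin n => c i.castSucc j.castSucc) d
    · by_cases he : d = e
      · rw [if_pos hd, if_pos he]
        simpa using card_le_univ (α := Fin 3) _
      · simpa [hd, he] using card_isRainbowFreeExtension_snoc_le_two c he
    · have hempty : ({x | IsRainbowFreeExtension c (Fin.snoc d x)} : Finset (Fin 3)) = ∅ := by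
        refine filter_eq_empty_iff.mpr fun x _ hx => hd ?_
        simpa [Fin.snoc_comp_castSucc] using hx.comp (Fin.castSucc_injective n)
      simp [hempty]
  rw [Fin.card_filter_eq_sum_card_filter_snoc]
  refine (sum_le_sum fun d _ => fiber d).trans ?_
  simp [sum_add_distrib, sum_ite, mul_comm]

end Counting

theorem card_isRainbowFreeExtension_lt (n : ℕ) (c : Fin n → Fin n → Fin 3) :
    #{d | IsRainbowFreeExtension c d} < 2 ^ (n + 1) := by
  induction n with
  | zero => exact (card_le_univ _).trans_lt (by simp)
  | succ n ih =>
    have := ih fun i j => c i.castSucc j.castSucc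
    have := card_isRainbowFreeExtension_succ_le c
    omega

def extendColoring {t : ℕ} (c : Fin t → Fin t → Fin 3) (d : Fin t → Fin 3) :
    Fin (t + 1) → Fin (t + 1) → Fin 3 := fun i j =>
  if hi : i = Fin.last t then
    (if hj : j = Fin.last t then 0 else d (j.castPred hj))
  else if hj : j = Fin.last t then d (i.castPred hi)
  else c (i.castPred hi) (j.castPred hj)

section extendColoring

variable {t : ℕ} (c : Fin t → Fin t → Fin 3) (d : Fin t → Fin 3)

@[simp]
lemma extendColoring_castSucc_castSucc (i j : Fin t) :
    extendColoring c d i.castSucc j.castSucc = c i j := by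
  simp [extendColoring, (Fin.castSucc_lt_last _).ne]

@[simp]
lemma extendColoring_castSucc_last (i : Fin t) :
    extendColoring c d i.castSucc (Fin.last t) = d i := by
  simp [extendColoring, (Fin.castSucc_lt_last _).ne]

@[simp]
lemma extendColoring_last_castSucc (i : Fin t) :
    extendColoring c d (Fin.last t) i.castSucc = d i := by
  simp [extendColoring, (Fin.castSucc_lt_last _).ne]

lemma extendColoring_comm {c} (hc : ∀ i j, c i j = c j i) (i j : Fin (t + 1)) :
    extendColoring c d i j = extendColoring c d j i := by
  unfold extendColoring
  split_ifs <;> simp_all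

end extendColoring

lemma containsPattern_rainbowPat_of_rainbow {V : Type*} {C : V → V → Fin 3}
    (hC : ∀ x y, C x y = C y x) {u v w : V} (huv : u ≠ v) (huw : u ≠ w) (hvw : v ≠ w)
    (h₁ : C u v ≠ C u w) (h₂ : C u v ≠ C v w) (h₃ : C u w ≠ C v w) :
    ContainsPattern (⊤ : SimpleGraph V) rainbowPat C := by
  refine ⟨![u, v, w], fun _ => trivial, ?_, ?_, ?_⟩
  · intro a b hab
    fin_cases a <;> fin_cases b <;> simp_all [eq_comm]
  · intro a b hab
    fin_cases a <;> fin_cases b <;> simp_all [eq_comm]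
  · intro i j i' j' hij hij'
    fin_cases i <;> fin_cases j <;> fin_cases i' <;> fin_cases j' <;>
      simp_all [rainbowPat, eq_comm]

lemma isRainbowFreeExtension_of_not_containsPattern {t : ℕ} {c : Fin t → Fin t → Fin 3}
    (hc : ∀ i j, c i j = c j i) {d : Fin t → Fin 3}
    (h : ¬ ContainsPattern (⊤ : SimpleGraph (Fin (t + 1))) rainbowPat (extendColoring c d)) :
    IsRainbowFreeExtension c d := by
  intro i j hij
  by_contra! hrb
  obtain ⟨h₁, h₂, h₃⟩ := hrb
  refine h (containsPattern_rainbowPat_of_rainbow (extendColoring_comm d hc)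
    (u := i.castSucc) (v := j.castSucc) (w := Fin.last t) (by simpa using hij)
    (Fin.castSucc_lt_last _).ne (Fin.castSucc_lt_last _).ne ?_ ?_ ?_) <;> simp_all [Ne.symm]

theorem statement13_general (t : ℕ) (ht : 2 ≤ t) (c0 : Fin t → Fin t → Fin 3)
    (hsymm : ∀ i j, c0 i j = c0 j i) :
    Nat.card {d : Fin t → Fin 3 //
      ¬ ContainsPattern (⊤ : SimpleGraph (Fin (t + 1))) rainbowPat
        (fun i j =>
          if hi : i = Fin.last t then
            (if hj : j = Fin.last t then 0 else d (j.castPred hj))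
          else if hj : j = Fin.last t then d (i.castPred hi)
          else c0 (i.castPred hi) (j.castPred hj))} ≤ t * 2 ^ t := by
  calc Nat.card {d // ¬ ContainsPattern ⊤ rainbowPat (extendColoring c0 d)}
      ≤ Nat.card {d // IsRainbowFreeExtension c0 d} :=
        Nat.card_le_card_of_injective _ (Subtype.impEmbedding _ _
          fun _ => isRainbowFreeExtension_of_not_containsPattern hsymm).injective
    _ = #{d | IsRainbowFreeExtension c0 d} := by
        rw [Nat.card_eq_fintype_card, Fintype.card_subtype]
    _ ≤ 2 ^ (t + 1) := (card_isRainbowFreeExtension_lt t c0).le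
    _ = 2 * 2 ^ t := by ring
    _ ≤ t * 2 ^ t := Nat.mul_le_mul_right _ ht

/-- Let `t ≥ 2` and let `c0` be a 3-edge-coloring of the complete graph on `{v₁, …, v_t}`
with no rainbow triangle.  The number of ways to 3-color the `t` edges from a new vertex
`v_{t+1}` to `{v₁, …, v_t}` so that the resulting 3-edge-coloring of `K_{t+1}` still has no
rainbow triangle is at most `t · 2^t`. -/
theorem statement13 (t : ℕ) (ht : 2 ≤ t) (c0 : Fin t → Fin t → Fin 3)
    (hsymm : ∀ i j, c0 i j = c0 j i)
    (hfree : ¬ ContainsPattern (⊤ : SimpleGraph (Fin t)) rainbowPat c0) :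
    Nat.card {d : Fin t → Fin 3 //
      ¬ ContainsPattern (⊤ : SimpleGraph (Fin (t + 1))) rainbowPat
        (fun i j =>
          if hi : i = Fin.last t then
            (if hj : j = Fin.last t then 0 else d (j.castPred hj))
          else if hj : j = Fin.last t then d (i.castPred hi)
          else c0 (i.castPred hi) (j.castPred hj))} ≤ t * 2 ^ t :=
  statement13_general t ht c0 hsymm
end

section
/- Let k ≥ 3 and let H be a (k−1)-partite graph on t vertices with vertex partition W = W₁ ∪ ⋯ ∪ W_{k−1}. If, for some m ≥ (k−1)², the graph H has at least ex(t, K_k) − m edges, then for every i ∈ {1, …, k−1} we have | |W_i| − t/(k−1) | ≤ √( (2(k−2)/(k−1))·m + 2(k−2) ) < √(2m). -/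
open SimpleGraph

/-- The Turán number `ex(n, K_k)`: the maximum number of edges of a `K_k`-free graph on `n`
vertices. -/
noncomputable def exNum (n k : ℕ) : ℕ :=
  sSup {m | ∃ H : SimpleGraph (Fin n), H.CliqueFree k ∧ H.edgeSet.ncard = m}

/-!
Write `q = k - 1`. A `q`-partite graph with parts of sizes `a_j` has at most
`(t² - ∑ a_j²) / 2` edges, with equality for the complete `q`-partite graph. Comparing with the Turán graph, whose parts differ
from `t / q` by at most one, the edge hypothesis gives `∑ (a_j - t/q)² ≤ q + 2m`. The deviations
`a_j - t/q` sum to zero, so Cauchy–Schwarz on the other `q - 1` parts bounds a single squared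
deviation by `(q - 1)/q` times that sum.
-/

open Finset

section Deviation

variable {ι α : Type*} [Field α] [LinearOrder α] [IsStrictOrderedRing α]

theorem Finset.sum_sq_sub_mean (s : Finset ι) (x : ι → α) :
    ∑ i ∈ s, (x i - (∑ j ∈ s, x j) / #s) ^ 2 = ∑ i ∈ s, x i ^ 2 - (∑ i ∈ s, x i) ^ 2 / #s := by
  rcases s.eq_empty_or_nonempty with rfl | hs
  · simp
  have hcard : (#s : α) ≠ 0 := by exact_mod_cast hs.card_pos.ne'
  set S := ∑ j ∈ s, x j
  calc ∑ i ∈ s, (x i - S / #s) ^ 2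
      = ∑ i ∈ s, x i ^ 2 - 2 * (S / #s) * S + #s * (S / #s) ^ 2 := by
        simp only [sub_sq, sum_add_distrib, sum_sub_distrib, ← sum_mul, ← mul_sum, sum_const,
          nsmul_eq_mul, S]
        ring
    _ = ∑ i ∈ s, x i ^ 2 - S ^ 2 / #s := by field_simp; ring

theorem Finset.card_mul_sq_le_of_sum_eq_zero [DecidableEq ι] {s : Finset ι} {d : ι → α}
    (hd : ∑ j ∈ s, d j = 0) {i : ι} (hi : i ∈ s) :
    #s * d i ^ 2 ≤ (#s - 1) * ∑ j ∈ s, d j ^ 2 := by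
  have hrest : ∑ j ∈ s.erase i, d j = -d i := by
    linarith [add_sum_erase s d hi]
  have hrest_sq : ∑ j ∈ s.erase i, d j ^ 2 = ∑ j ∈ s, d j ^ 2 - d i ^ 2 := by
    linarith [add_sum_erase s (fun j => d j ^ 2) hi]
  have hcs := sq_sum_le_card_mul_sum_sq (s := s.erase i) (f := d)
  rw [hrest, hrest_sq, card_erase_of_mem hi, Nat.cast_sub (card_pos.2 ⟨i, hi⟩), Nat.cast_one,
    neg_sq] at hcs
  linarith

end Deviation

section Fibers

variable {V ι : Type*} [Fintype V] [Fintype ι] [DecidableEq ι]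

theorem sum_card_fiber_eq_card (f : V → ι) :
    ∑ i, (#{v | f v = i} : ℝ) = Fintype.card V := by
  exact_mod_cast (card_eq_sum_card_fiberwise fun v _ => mem_univ (f v)).symm

theorem sum_card_fiber_eq_sum_sq (f : V → ι) :
    ∑ v, #{u | f u = f v} = ∑ i, #{v | f v = i} ^ 2 := by
  rw [← sum_fiberwise univ f]
  refine sum_congr rfl fun i _ => ?_
  rw [sum_congr rfl fun v hv => by rw [(mem_filter.1 hv).2], sum_const, smul_eq_mul, sq]

theorem sum_sq_card_fiber_sub_div (f : V → ι) :
    ∑ i, ((#{v | f v = i} : ℝ) - Fintype.card V / Fintype.card ι) ^ 2 =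
      ∑ i, (#{v | f v = i} : ℝ) ^ 2 - (Fintype.card V : ℝ) ^ 2 / Fintype.card ι := by
  simpa only [sum_card_fiber_eq_card, card_univ] using
    sum_sq_sub_mean univ fun i => (#{v | f v = i} : ℝ)

theorem card_mul_sq_card_fiber_sub_div_le (f : V → ι) (i : ι) :
    (Fintype.card ι : ℝ) * ((#{v | f v = i} : ℝ) - Fintype.card V / Fintype.card ι) ^ 2 ≤
      (Fintype.card ι - 1) *
        ∑ j, ((#{v | f v = j} : ℝ) - Fintype.card V / Fintype.card ι) ^ 2 := by
  have hι : (Fintype.card ι : ℝ) ≠ 0 := by exact_mod_cast (Fintype.card_pos_iff.2 ⟨i⟩).ne'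
  have hsum : ∑ j, ((#{v | f v = j} : ℝ) - Fintype.card V / Fintype.card ι) = 0 := by
    rw [sum_sub_distrib, sum_card_fiber_eq_card, sum_const, card_univ, nsmul_eq_mul,
      mul_div_cancel₀ _ hι, sub_self]
  simpa only [card_univ] using card_mul_sq_le_of_sum_eq_zero hsum (mem_univ i)

end Fibers

namespace SimpleGraph

section Multipartite

variable {V ι : Type*} [Fintype V] [Fintype ι] [DecidableEq ι]

theorem two_mul_card_edgeFinset_add_sum_sq_eq (G : SimpleGraph V) [DecidableRel G.Adj]
    (f : V → ι) (hG : ∀ u v, G.Adj u v ↔ f u ≠ f v) :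
    2 * #G.edgeFinset + ∑ i, #{v | f v = i} ^ 2 = Fintype.card V ^ 2 := by
  have hdeg (v : V) : G.degree v + #{u | f u = f v} = Fintype.card V := by
    have hnbr : #(G.neighborFinset v) = #{u | ¬f u = f v} := by
      simp only [neighborFinset_eq_filter, hG, ne_comm]
    rw [← card_neighborFinset_eq_degree, hnbr, add_comm, card_filter_add_card_filter_not,
      card_univ]
  rw [← sum_degrees_eq_twice_card_edges, ← sum_card_fiber_eq_sum_sq, ← sum_add_distrib,
    sum_congr rfl fun v _ => hdeg v, sum_const, card_univ, smul_eq_mul, sq]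

theorem two_mul_card_edgeFinset_add_sum_sq_le (G : SimpleGraph V) [DecidableRel G.Adj]
    (f : V → ι) (hG : ∀ u v, G.Adj u v → f u ≠ f v) :
    2 * #G.edgeFinset + ∑ i, #{v | f v = i} ^ 2 ≤ Fintype.card V ^ 2 := by
  classical
  have : G ≤ (⊤ : SimpleGraph ι).comap f := fun u v huv => hG u v huv
  rw [← two_mul_card_edgeFinset_add_sum_sq_eq ((⊤ : SimpleGraph ι).comap f) f
    fun u v => Iff.rfl]
  gcongr

end Multipartite

section Turan

def turanPart {t q : ℕ} (hq : 0 < q) (v : Fin t) : Fin q := ⟨v % q, Nat.mod_lt _ hq⟩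

variable {t q : ℕ} (hq : 0 < q)

theorem turanGraph_adj_iff_turanPart_ne {u v : Fin t} :
    (turanGraph t q).Adj u v ↔ turanPart hq u ≠ turanPart hq v := by
  simp [turanGraph_adj, turanPart, Fin.ext_iff]

theorem card_turanPart_eq (j : Fin q) :
    #{v : Fin t | turanPart hq v = j} = t / q + if (j : ℕ) < t % q then 1 else 0 := by
  rw [← Nat.mod_eq_of_lt j.isLt, ← Nat.count_modEq_card t hq, Nat.count_eq_card_filter_range,
    card_filter, card_filter, ← Fin.sum_univ_eq_sum_range]
  simp [turanPart, Fin.ext_iff, Nat.ModEq, Nat.mod_eq_of_lt j.isLt]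

theorem abs_card_turanPart_sub_le_one (j : Fin q) :
    |(#{v : Fin t | turanPart hq v = j} : ℝ) - t / q| ≤ 1 := by
  have hfloor_le : ((t / q : ℕ) : ℝ) ≤ t / q := Nat.cast_div_le
  have hlt_floor : (t : ℝ) / q < (t / q : ℕ) + 1 := by
    rw [← Nat.floor_div_eq_div (K := ℝ)]
    exact Nat.lt_floor_add_one _
  rw [card_turanPart_eq, abs_le]
  split_ifs <;> push_cast <;> constructor <;> linarith

theorem sum_sq_card_turanPart_sub_le :
    ∑ j, ((#{v : Fin t | turanPart hq v = j} : ℝ) - t / q) ^ 2 ≤ q := by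
  calc _ ≤ ∑ _j : Fin q, (1 : ℝ) :=
        sum_le_sum fun j _ => (sq_le_one_iff_abs_le_one _).2 (abs_card_turanPart_sub_le_one hq j)
    _ = q := by simp

end Turan

end SimpleGraph

theorem ncard_edgeSet_le_exNum {t k : ℕ} (G : SimpleGraph (Fin t)) (hG : G.CliqueFree k) :
    G.edgeSet.ncard ≤ exNum t k :=
  le_csSup ⟨(Set.univ : Set (Sym2 (Fin t))).ncard, by
    rintro _ ⟨G', -, rfl⟩
    exact Set.ncard_le_ncard (Set.subset_univ _)⟩ ⟨G, hG, rfl⟩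

theorem sum_sq_card_fiber_sub_div_le_of_exNum_sub_le {t q : ℕ} {m : ℝ} (hq : 0 < q)
    (H : SimpleGraph (Fin t)) (W : Fin t → Fin q) (hpart : ∀ u v, H.Adj u v → W u ≠ W v)
    (hedges : (exNum t (q + 1) : ℝ) - m ≤ H.edgeSet.ncard) :
    ∑ j, ((#{v | W v = j} : ℝ) - t / q) ^ 2 ≤ q + 2 * m := by
  classical
  have hH := two_mul_card_edgeFinset_add_sum_sq_le H W hpart
  have hT := two_mul_card_edgeFinset_add_sum_sq_eq (turanGraph t q) (turanPart hq)
    fun u v => turanGraph_adj_iff_turanPart_ne hq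
  have hTex := ncard_edgeSet_le_exNum _ (turanGraph_cliqueFree (n := t) hq)
  rw [← coe_edgeFinset, Set.ncard_coe_finset] at hedges hTex
  have hdevW := sum_sq_card_fiber_sub_div W
  have hdevT := sum_sq_card_fiber_sub_div (turanPart (t := t) hq)
  have hT_le := sum_sq_card_turanPart_sub_le (t := t) hq
  simp only [Fintype.card_fin] at hH hT hdevW hdevT
  replace hH := (Nat.cast_le (α := ℝ)).2 hH
  replace hT := congrArg (Nat.cast : ℕ → ℝ) hT
  replace hTex := (Nat.cast_le (α := ℝ)).2 hTex
  push_cast at hH hT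
  linarith

theorem statement18_general (k t m : ℕ)
    (H : SimpleGraph (Fin t)) (W : Fin t → Fin (k - 1))
    (hpart : ∀ u v, H.Adj u v → W u ≠ W v)
    (hm : (k - 1) ^ 2 ≤ m)
    (hedges : (exNum t k : ℝ) - (m : ℝ) ≤ (H.edgeSet.ncard : ℝ)) :
    ∀ i : Fin (k - 1),
      |({v | W v = i}.ncard : ℝ) - (t : ℝ) / ((k : ℝ) - 1)| ≤
        Real.sqrt (2 * ((k : ℝ) - 2) / ((k : ℝ) - 1) * (m : ℝ) + 2 * ((k : ℝ) - 2)) ∧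
      Real.sqrt (2 * ((k : ℝ) - 2) / ((k : ℝ) - 1) * (m : ℝ) + 2 * ((k : ℝ) - 2)) <
        Real.sqrt (2 * (m : ℝ)) := by
  intro i
  obtain ⟨q, rfl⟩ : ∃ q, k = q + 1 := ⟨k - 1, by have := i.pos; omega⟩
  have hq : 0 < q := i.pos
  have hsum := sum_sq_card_fiber_sub_div_le_of_exNum_sub_le (q := q) hq H W hpart hedges
  have hsingle := card_mul_sq_card_fiber_sub_div_le (ι := Fin q) W i
  simp only [Fintype.card_fin] at hsingle
  have hq1 : (1 : ℝ) ≤ q := by exact_mod_cast hq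
  have hmq : (q : ℝ) ^ 2 ≤ m := by exact_mod_cast hm
  set d := (#{v | W v = i} : ℝ) - t / q
  set R := 2 * ((q : ℝ) - 1) / q * m + 2 * (q - 1)
  have hqR : q * R = 2 * (q - 1) * m + 2 * (q - 1) * q := by
    simp only [R]; field_simp
  have hd : d ^ 2 ≤ R := by
    refine le_of_mul_le_mul_left ?_ (by positivity : (0 : ℝ) < q)
    calc q * d ^ 2 ≤ (q - 1) * ∑ j, ((#{v | W v = j} : ℝ) - t / q) ^ 2 := hsingle
      _ ≤ (q - 1) * (q + 2 * m) := mul_le_mul_of_nonneg_left hsum (by linarith)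
      _ ≤ q * R := by rw [hqR]; nlinarith
  have hRm : R < 2 * m := by
    refine lt_of_mul_lt_mul_left ?_ (by positivity : (0 : ℝ) ≤ q)
    rw [hqR]
    nlinarith
  have hk1 : ((q + 1 : ℕ) : ℝ) - 1 = q := by push_cast; ring
  have hk2 : ((q + 1 : ℕ) : ℝ) - 2 = q - 1 := by push_cast; ring
  rw [hk1, hk2, ← coe_filter_univ, Set.ncard_coe_finset]
  exact ⟨Real.abs_le_sqrt hd, Real.sqrt_lt_sqrt ((sq_nonneg d).trans hd) hRm⟩

/-- Let `k ≥ 3` and let `H` be a `(k-1)`-partite graph on `t` vertices with partition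
`W₁ ∪ ⋯ ∪ W_{k-1}` (the fibers of a map `W`).  If for some `m ≥ (k-1)²` the graph `H` has
at least `ex(t, K_k) - m` edges, then every part satisfies
`| |Wᵢ| - t/(k-1) | ≤ √((2(k-2)/(k-1))·m + 2(k-2)) < √(2m)`. -/
theorem statement18 (k t m : ℕ) (hk : 3 ≤ k)
    (H : SimpleGraph (Fin t)) (W : Fin t → Fin (k - 1))
    (hpart : ∀ u v, H.Adj u v → W u ≠ W v)
    (hm : (k - 1) ^ 2 ≤ m)
    (hedges : (exNum t k : ℝ) - (m : ℝ) ≤ (H.edgeSet.ncard : ℝ)) :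
    ∀ i : Fin (k - 1),
      |({v | W v = i}.ncard : ℝ) - (t : ℝ) / ((k : ℝ) - 1)| ≤
        Real.sqrt (2 * ((k : ℝ) - 2) / ((k : ℝ) - 1) * (m : ℝ) + 2 * ((k : ℝ) - 2)) ∧
      Real.sqrt (2 * ((k : ℝ) - 2) / ((k : ℝ) - 1) * (m : ℝ) + 2 * ((k : ℝ) - 2)) <
        Real.sqrt (2 * (m : ℝ)) :=
  statement18_general k t m H W hpart hm hedges
end
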